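/- arXiv:1107.3248 — 10 statements merged into one kernel-verified Lean document; each statement's English description precedes it below -/
import Mathlib

section
/- Let Θ = (α,β,γ) ∈ Sₙ³. There exists a non-empty partial Latin square of order n admitting Θ as an autotopism if and only if there exist i, j, k ∈ [n] such that α has a cycle of length i, β has a cycle of length j, γ has a cycle of length k, and lcm(i,j) = lcm(i,k) = lcm(j,k) = lcm(i,j,k). -/
open scoped Classical

/-- An isotopism of order `n`: a triple of permutations of `Fin n`. -/
abbrev Iso (n : ℕ) := Equiv.Perm (Fin n) × Equiv.Perm (Fin n) × Equiv.Perm (Fin n)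

/-- `O` is (the orthogonal representation of) a partial Latin square:
any two triples agreeing in two coordinates are equal. -/
def IsPLS {n : ℕ} (O : Finset (Fin n × Fin n × Fin n)) : Prop :=
  ∀ t₁ ∈ O, ∀ t₂ ∈ O,
    ((t₁.1 = t₂.1 ∧ t₁.2.1 = t₂.2.1) → t₁ = t₂) ∧
    ((t₁.1 = t₂.1 ∧ t₁.2.2 = t₂.2.2) → t₁ = t₂) ∧
    ((t₁.2.1 = t₂.2.1 ∧ t₁.2.2 = t₂.2.2) → t₁ = t₂)

/-- The action of an isotopism on a set of triples. -/
def applyIso {n : ℕ} (Θ : Iso n) (O : Finset (Fin n × Fin n × Fin n)) :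
    Finset (Fin n × Fin n × Fin n) :=
  O.image fun t => (Θ.1 t.1, Θ.2.1 t.2.1, Θ.2.2 t.2.2)

/-- `Θ` is an autotopism of `O`. -/
def IsAutotopism {n : ℕ} (Θ : Iso n) (O : Finset (Fin n × Fin n × Fin n)) : Prop :=
  applyIso Θ O = O

/-- `Θ` is an autotopism of some non-empty partial Latin square of order `n`. -/
def IsAutPLS {n : ℕ} (Θ : Iso n) : Prop :=
  ∃ O : Finset (Fin n × Fin n × Fin n), O.Nonempty ∧ IsPLS O ∧ IsAutotopism Θ O

/-- `O` is (the orthogonal representation of) a Latin square of order `n`. -/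
def IsLS {n : ℕ} (O : Finset (Fin n × Fin n × Fin n)) : Prop :=
  IsPLS O ∧ O.card = n * n

/-- The number of `i`-cycles of a permutation (fixed points count as 1-cycles). -/
def numCycles {n : ℕ} (π : Equiv.Perm (Fin n)) (i : ℕ) : ℕ :=
  if i = 1 then (Finset.univ.filter fun x => π x = x).card
  else Multiset.count i π.cycleType

/-- `π` has a cycle of length `i` in its disjoint cycle decomposition. -/
def HasCycle {n : ℕ} (π : Equiv.Perm (Fin n)) (i : ℕ) : Prop :=
  0 < numCycles π i

/-- The lcm condition on a triple of cycle lengths. -/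
def Admissible (i j k : ℕ) : Prop :=
  Nat.lcm i j = Nat.lcm i k ∧ Nat.lcm i j = Nat.lcm j k ∧
    Nat.lcm i j = Nat.lcm i (Nat.lcm j k)

/-- Componentwise composition of isotopisms. -/
def compIso {n : ℕ} (Θ Θ' : Iso n) : Iso n :=
  (Θ.1 * Θ'.1, Θ.2.1 * Θ'.2.1, Θ.2.2 * Θ'.2.2)

/-- Componentwise inverse of an isotopism. -/
def invIso {n : ℕ} (Θ : Iso n) : Iso n := (Θ.1⁻¹, Θ.2.1⁻¹, Θ.2.2⁻¹)

/-- The set of elements of the cycle of `π` containing `a` (its orbit). -/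
def orbitFinset {n : ℕ} (π : Equiv.Perm (Fin n)) (a : Fin n) : Finset (Fin n) :=
  Finset.univ.filter fun x => π.SameCycle a x

/-- `P` is `Θ`-completable: `Θ` is an autotopism of the partial Latin square `P`
and `P` can be completed to a Latin square admitting `Θ` as an autotopism. -/
def ThetaCompletable {n : ℕ} (Θ : Iso n) (O : Finset (Fin n × Fin n × Fin n)) : Prop :=
  IsPLS O ∧ IsAutotopism Θ O ∧ ∃ L, IsLS L ∧ IsAutotopism Θ L ∧ O ⊆ L

/-- The set of filled cells (row, column) of a partial Latin square. -/
def filledCells {n : ℕ} (O : Finset (Fin n × Fin n × Fin n)) : Finset (Fin n × Fin n) :=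
  O.image fun t => (t.1, t.2.1)

/-- The partition function. -/
def pnat (k : ℕ) : ℕ := Fintype.card (Nat.Partition k)

namespace AuxAut

variable {n : ℕ}

/-- Length of the cycle of `π` containing `a`. -/
noncomputable def clen (π : Equiv.Perm (Fin n)) (a : Fin n) : ℕ :=
  if π a = a then 1 else (π.cycleOf a).support.card

lemma pow_apply_eq_iff (π : Equiv.Perm (Fin n)) (a : Fin n) (m : ℕ) :
    (π ^ m) a = a ↔ clen π a ∣ m := by
  by_cases h : π a = a
  · simp [clen, h, Equiv.Perm.pow_apply_eq_self_of_apply_eq_self h]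
  · have ha : a ∈ (π.cycleOf a).support :=
      Equiv.Perm.mem_support_cycleOf_iff.mpr
        ⟨Equiv.Perm.SameCycle.refl _ _, Equiv.Perm.mem_support.mpr h⟩
    rw [clen, if_neg h]
    exact (π.isCycleOn_support_cycleOf a).pow_apply_eq ha

lemma clen_pos (π : Equiv.Perm (Fin n)) (a : Fin n) : 1 ≤ clen π a := by
  by_cases h : π a = a
  · simp [clen, h]
  · have h2 : 2 ≤ (π.cycleOf a).support.card :=
      Equiv.Perm.two_le_card_support_cycleOf_iff.mpr h
    rw [clen, if_neg h]; omega

lemma clen_le (π : Equiv.Perm (Fin n)) (a : Fin n) : clen π a ≤ n := by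
  by_cases h : π a = a
  · rw [clen, if_pos h]; exact a.pos
  · rw [clen, if_neg h]
    simpa using Finset.card_le_univ (π.cycleOf a).support

lemma hasCycle_clen (π : Equiv.Perm (Fin n)) (a : Fin n) : HasCycle π (clen π a) := by
  by_cases h : π a = a
  · rw [HasCycle, clen, if_pos h, numCycles, if_pos rfl]
    refine Finset.card_pos.mpr ⟨a, ?_⟩
    simp [h]
  · have h2 : 2 ≤ (π.cycleOf a).support.card :=
      Equiv.Perm.two_le_card_support_cycleOf_iff.mpr h
    rw [HasCycle, clen, if_neg h, numCycles, if_neg (by omega), Multiset.count_pos,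
      Equiv.Perm.cycleType_def, Multiset.mem_map]
    exact ⟨π.cycleOf a,
      Finset.mem_val.mpr
        (Equiv.Perm.cycleOf_mem_cycleFactorsFinset_iff.mpr (Equiv.Perm.mem_support.mpr h)), rfl⟩

lemma exists_clen (π : Equiv.Perm (Fin n)) (i : ℕ) (h : HasCycle π i) :
    ∃ a : Fin n, clen π a = i := by
  rw [HasCycle, numCycles] at h
  by_cases hi : i = 1
  · rw [if_pos hi] at h
    obtain ⟨a, ha⟩ := Finset.card_pos.mp h
    rw [Finset.mem_filter] at ha
    exact ⟨a, by rw [clen, if_pos ha.2, hi]⟩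
  · rw [if_neg hi] at h
    have hmem := Multiset.count_pos.mp h
    rw [Equiv.Perm.cycleType_def, Multiset.mem_map] at hmem
    obtain ⟨c, hc, hci⟩ := hmem
    rw [Finset.mem_val] at hc
    have hcyc := (Equiv.Perm.mem_cycleFactorsFinset_iff.mp hc).1
    obtain ⟨a, ha⟩ := Finset.card_pos.mp (lt_of_lt_of_le (by norm_num) hcyc.two_le_card_support)
    have hπa : π a ≠ a := by
      have := (Equiv.Perm.mem_cycleFactorsFinset_iff.mp hc).2 a ha
      rw [← this]; exact Equiv.Perm.mem_support.mp ha
    have hco : c = π.cycleOf a := Equiv.Perm.cycle_is_cycleOf ha hc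
    exact ⟨a, by rw [clen, if_neg hπa, ← hco]; exact hci⟩

lemma pow_eq_pow_iff (π : Equiv.Perm (Fin n)) (a : Fin n) {m m' d : ℕ} (hd : m' + d = m) :
    (π ^ m) a = (π ^ m') a ↔ clen π a ∣ d := by
  subst hd
  rw [pow_add, Equiv.Perm.mul_apply, Equiv.apply_eq_iff_eq, pow_apply_eq_iff]

lemma key (x y z : Equiv.Perm (Fin n)) (a b c : Fin n)
    (h : clen z c ∣ Nat.lcm (clen x a) (clen y b)) {m m' : ℕ} (hle : m' ≤ m)
    (h1 : (x ^ m) a = (x ^ m') a) (h2 : (y ^ m) b = (y ^ m') b) :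
    (z ^ m) c = (z ^ m') c := by
  have hd : m' + (m - m') = m := by omega
  rw [pow_eq_pow_iff x a hd] at h1
  rw [pow_eq_pow_iff y b hd] at h2
  rw [pow_eq_pow_iff z c hd]
  exact h.trans (Nat.lcm_dvd h1 h2)

end AuxAut

/-- characterization of autotopisms of non-empty partial Latin squares. -/
theorem stmt1 (n : ℕ) (α β γ : Equiv.Perm (Fin n)) :
    IsAutPLS (α, β, γ) ↔ ∃ i j k : ℕ,
      1 ≤ i ∧ i ≤ n ∧ 1 ≤ j ∧ j ≤ n ∧ 1 ≤ k ∧ k ≤ n ∧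
      HasCycle α i ∧ HasCycle β j ∧ HasCycle γ k ∧ Admissible i j k := by
  constructor
  · rintro ⟨O, ⟨⟨r, c, s⟩, ht⟩, hPLS, hAut⟩
    have hstep : ∀ t ∈ O, (α t.1, β t.2.1, γ t.2.2) ∈ O := by
      intro t htO
      rw [← hAut]
      exact Finset.mem_image_of_mem _ htO
    have hm : ∀ m : ℕ, ((α ^ m) r, (β ^ m) c, (γ ^ m) s) ∈ O := by
      intro m
      induction m with
      | zero => simpa using ht
      | succ m ih =>
        have := hstep _ ih
        simpa [pow_succ', Equiv.Perm.mul_apply] using this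
    set i := AuxAut.clen α r with hi
    set j := AuxAut.clen β c with hj
    set k := AuxAut.clen γ s with hk
    have hdvd : ∀ m : ℕ, (α ^ m) r = r → (β ^ m) c = c → (γ ^ m) s = s := by
      intro m h1 h2
      have := (hPLS _ (hm m) _ ht).1 ⟨h1, h2⟩
      exact congrArg (fun t => t.2.2) this
    have hdvd' : ∀ m : ℕ, (α ^ m) r = r → (γ ^ m) s = s → (β ^ m) c = c := by
      intro m h1 h2
      have := (hPLS _ (hm m) _ ht).2.1 ⟨h1, h2⟩
      exact congrArg (fun t => t.2.1) this
    have hdvd'' : ∀ m : ℕ, (β ^ m) c = c → (γ ^ m) s = s → (α ^ m) r = r := by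
      intro m h1 h2
      have := (hPLS _ (hm m) _ ht).2.2 ⟨h1, h2⟩
      exact congrArg (fun t => t.1) this
    have hkij : k ∣ Nat.lcm i j := by
      rw [← AuxAut.pow_apply_eq_iff]
      exact hdvd _ ((AuxAut.pow_apply_eq_iff α r _).mpr (Nat.dvd_lcm_left _ _))
        ((AuxAut.pow_apply_eq_iff β c _).mpr (Nat.dvd_lcm_right _ _))
    have hjik : j ∣ Nat.lcm i k := by
      rw [← AuxAut.pow_apply_eq_iff]
      exact hdvd' _ ((AuxAut.pow_apply_eq_iff α r _).mpr (Nat.dvd_lcm_left _ _))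
        ((AuxAut.pow_apply_eq_iff γ s _).mpr (Nat.dvd_lcm_right _ _))
    have hijk : i ∣ Nat.lcm j k := by
      rw [← AuxAut.pow_apply_eq_iff]
      exact hdvd'' _ ((AuxAut.pow_apply_eq_iff β c _).mpr (Nat.dvd_lcm_left _ _))
        ((AuxAut.pow_apply_eq_iff γ s _).mpr (Nat.dvd_lcm_right _ _))
    refine ⟨i, j, k, AuxAut.clen_pos α r, AuxAut.clen_le α r, AuxAut.clen_pos β c,
      AuxAut.clen_le β c, AuxAut.clen_pos γ s, AuxAut.clen_le γ s,
      AuxAut.hasCycle_clen α r, AuxAut.hasCycle_clen β c, AuxAut.hasCycle_clen γ s, ?_, ?_, ?_⟩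
    · exact Nat.dvd_antisymm (Nat.lcm_dvd (Nat.dvd_lcm_left i k) hjik)
        (Nat.lcm_dvd (Nat.dvd_lcm_left i j) hkij)
    · exact Nat.dvd_antisymm (Nat.lcm_dvd hijk (Nat.dvd_lcm_left j k))
        (Nat.lcm_dvd (Nat.dvd_lcm_right i j) hkij)
    · exact Nat.dvd_antisymm
        (Nat.lcm_dvd (Nat.dvd_lcm_left _ _)
          ((Nat.dvd_lcm_left j k).trans (Nat.dvd_lcm_right _ _)))
        (Nat.lcm_dvd (Nat.dvd_lcm_left i j) (Nat.lcm_dvd (Nat.dvd_lcm_right i j) hkij))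
  · rintro ⟨i, j, k, hi1, _, hj1, _, hk1, _, hα, hβ, hγ, hadm⟩
    obtain ⟨r, hr⟩ := AuxAut.exists_clen α i hα
    obtain ⟨c, hc⟩ := AuxAut.exists_clen β j hβ
    obtain ⟨s, hs⟩ := AuxAut.exists_clen γ k hγ
    set L : ℕ := Nat.lcm i (Nat.lcm j k) with hL
    have hLpos : 1 ≤ L :=
      Nat.lcm_pos hi1 (Nat.lcm_pos hj1 hk1)
    have hkij : k ∣ Nat.lcm i j := hadm.1 ▸ Nat.dvd_lcm_right i k
    have hjik : j ∣ Nat.lcm i k := hadm.1.symm ▸ Nat.dvd_lcm_right i j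
    have hijk : i ∣ Nat.lcm j k := hadm.2.1 ▸ Nat.dvd_lcm_left i j
    refine ⟨Finset.univ.filter fun t => ∃ m : ℕ, t = ((α ^ m) r, (β ^ m) c, (γ ^ m) s),
      ⟨(r, c, s), ?_⟩, ?_, ?_⟩
    · rw [Finset.mem_filter]
      exact ⟨Finset.mem_univ _, 0, by simp⟩
    · intro t₁ ht₁ t₂ ht₂
      rw [Finset.mem_filter] at ht₁ ht₂
      obtain ⟨-, m, rfl⟩ := ht₁
      obtain ⟨-, m', rfl⟩ := ht₂
      have htri : ∀ m m' : ℕ, m' ≤ m →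
          (((α ^ m) r = (α ^ m') r ∧ (β ^ m) c = (β ^ m') c) →
            ((α ^ m) r, (β ^ m) c, (γ ^ m) s) = ((α ^ m') r, (β ^ m') c, (γ ^ m') s)) ∧
          (((α ^ m) r = (α ^ m') r ∧ (γ ^ m) s = (γ ^ m') s) →
            ((α ^ m) r, (β ^ m) c, (γ ^ m) s) = ((α ^ m') r, (β ^ m') c, (γ ^ m') s)) ∧
          (((β ^ m) c = (β ^ m') c ∧ (γ ^ m) s = (γ ^ m') s) →
            ((α ^ m) r, (β ^ m) c, (γ ^ m) s) = ((α ^ m') r, (β ^ m') c, (γ ^ m') s)) := by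
        intro m m' hle
        refine ⟨fun ⟨h1, h2⟩ => ?_, fun ⟨h1, h2⟩ => ?_, fun ⟨h1, h2⟩ => ?_⟩
        · have h3 := AuxAut.key α β γ r c s (hr ▸ hc ▸ hs ▸ hkij) hle h1 h2
          rw [h1, h2, h3]
        · have h3 := AuxAut.key α γ β r s c (hr ▸ hc ▸ hs ▸ hjik) hle h1 h2
          rw [h1, h2, h3]
        · have h3 := AuxAut.key β γ α c s r (hr ▸ hc ▸ hs ▸ hijk) hle h1 h2
          rw [h1, h2, h3]
      rcases le_total m' m with hle | hle
      · exact htri m m' hle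
      · obtain ⟨H1, H2, H3⟩ := htri m' m hle
        exact ⟨fun ⟨h1, h2⟩ => (H1 ⟨h1.symm, h2.symm⟩).symm,
          fun ⟨h1, h2⟩ => (H2 ⟨h1.symm, h2.symm⟩).symm,
          fun ⟨h1, h2⟩ => (H3 ⟨h1.symm, h2.symm⟩).symm⟩
    · rw [IsAutotopism, applyIso]
      apply Finset.ext
      intro t
      constructor
      · intro ht
        rw [Finset.mem_image] at ht
        obtain ⟨u, hu, rfl⟩ := ht
        rw [Finset.mem_filter] at hu ⊢
        obtain ⟨-, m, rfl⟩ := hu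
        exact ⟨Finset.mem_univ _, m + 1, by simp [pow_succ', Equiv.Perm.mul_apply]⟩
      · intro ht
        rw [Finset.mem_filter] at ht
        obtain ⟨-, m, rfl⟩ := ht
        rw [Finset.mem_image]
        refine ⟨((α ^ (m + L - 1)) r, (β ^ (m + L - 1)) c, (γ ^ (m + L - 1)) s), ?_, ?_⟩
        · rw [Finset.mem_filter]
          exact ⟨Finset.mem_univ _, m + L - 1, rfl⟩
        · have hd : m + (L) = m + L - 1 + 1 := by omega
          have e1 : α ((α ^ (m + L - 1)) r) = (α ^ m) r := by
            rw [← Equiv.Perm.mul_apply, ← pow_succ', ← hd]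
            exact (AuxAut.pow_eq_pow_iff α r rfl).mpr (hr ▸ Nat.dvd_lcm_left _ _)
          have e2 : β ((β ^ (m + L - 1)) c) = (β ^ m) c := by
            rw [← Equiv.Perm.mul_apply, ← pow_succ', ← hd]
            exact (AuxAut.pow_eq_pow_iff β c rfl).mpr
              (hc ▸ (Nat.dvd_lcm_left j k).trans (Nat.dvd_lcm_right _ _))
          have e3 : γ ((γ ^ (m + L - 1)) s) = (γ ^ m) s := by
            rw [← Equiv.Perm.mul_apply, ← pow_succ', ← hd]
            exact (AuxAut.pow_eq_pow_iff γ s rfl).mpr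
              (hs ▸ (Nat.dvd_lcm_right j k).trans (Nat.dvd_lcm_right _ _))
          rw [e1, e2, e3]
end

section
/- For every n > 2, the isotopism Θ = (α, β, id) where α = β is a transposition of [n] (cycle structure (2·1^{n-2}, 2·1^{n-2}, 1ⁿ)) is an autotopism of some non-empty partial Latin square of order n, but is not an autotopism of any (complete) Latin square of order n. Consequently the set of autotopisms of Latin squares of order n is a proper subset of the set of autotopisms of non-empty partial Latin squares of order n. -/
open scoped Classical

-- Auxiliary lemma: part 1
lemma aux_autPLS {n : ℕ} (α : Equiv.Perm (Fin n)) (a b : Fin n) (hab : a ≠ b)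
    (hα : α = Equiv.swap a b) : IsAutPLS (α, α, (1 : Equiv.Perm (Fin n))) := by
  have ha' : α a = b := by rw [hα]; exact Equiv.swap_apply_left a b
  have hb' : α b = a := by rw [hα]; exact Equiv.swap_apply_right a b
  refine ⟨{(a, b, a), (b, a, a)}, ⟨(a, b, a), by simp⟩, ?_, ?_⟩
  · intro t₁ ht₁ t₂ ht₂
    simp only [Finset.mem_insert, Finset.mem_singleton] at ht₁ ht₂
    rcases ht₁ with rfl | rfl <;> rcases ht₂ with rfl | rfl <;>
      refine ⟨fun h => ?_, fun h => ?_, fun h => ?_⟩ <;> simp_all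
  · show applyIso _ _ = _
    ext t
    simp only [applyIso, Finset.mem_image, Finset.mem_insert, Finset.mem_singleton]
    constructor
    · rintro ⟨u, (rfl | rfl), rfl⟩ <;> simp [ha', hb']
    · rintro (rfl | rfl)
      · exact ⟨(b, a, a), Or.inr rfl, by simp [ha', hb']⟩
      · exact ⟨(a, b, a), Or.inl rfl, by simp [ha', hb']⟩

-- Auxiliary lemma: part 2
lemma aux_noLS {n : ℕ} (hn : 2 < n) (α : Equiv.Perm (Fin n)) (a b : Fin n) (hab : a ≠ b)
    (hα : α = Equiv.swap a b) :
    ¬ ∃ L : Finset (Fin n × Fin n × Fin n),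
        IsLS L ∧ IsAutotopism (α, α, (1 : Equiv.Perm (Fin n))) L := by
  rintro ⟨L, ⟨hPLS, hcard⟩, haut⟩
  -- find c ∉ {a, b}
  obtain ⟨c, hc⟩ : ∃ c : Fin n, c ∉ ({a, b} : Finset (Fin n)) := by
    by_contra h
    push_neg at h
    have hsub : (Finset.univ : Finset (Fin n)) ⊆ {a, b} := fun x _ => h x
    have := Finset.card_le_card hsub
    simp only [Finset.card_univ, Fintype.card_fin] at this
    have h2 : ({a, b} : Finset (Fin n)).card ≤ 2 := Finset.card_insert_le _ _ |>.trans (by simp)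
    omega
  simp only [Finset.mem_insert, Finset.mem_singleton, not_or] at hc
  have hca : c ≠ a := hc.1
  have hcb : c ≠ b := hc.2
  have hαc : α c = c := by rw [hα]; exact Equiv.swap_apply_of_ne_of_ne hca hcb
  have hαa : α a = b := by rw [hα]; exact Equiv.swap_apply_left a b
  -- every cell is filled
  have hinj : Set.InjOn (fun t : Fin n × Fin n × Fin n => (t.1, t.2.1)) L := by
    intro t₁ ht₁ t₂ ht₂ h
    have h' : (t₁.1, t₁.2.1) = (t₂.1, t₂.2.1) := h
    obtain ⟨h1, h2⟩ := Prod.mk.inj h'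
    exact (hPLS t₁ ht₁ t₂ ht₂).1 ⟨h1, h2⟩
  have himg : (L.image fun t => (t.1, t.2.1)) = (Finset.univ : Finset (Fin n × Fin n)) := by
    apply Finset.eq_univ_of_card
    rw [Finset.card_image_of_injOn hinj, hcard]
    simp [Fintype.card_prod]
  have hmem : (c, a) ∈ L.image fun t => (t.1, t.2.1) := by rw [himg]; exact Finset.mem_univ _
  obtain ⟨t, htL, hteq⟩ := Finset.mem_image.mp hmem
  obtain ⟨r, j, s⟩ := t
  have hr : r = c := congrArg Prod.fst hteq
  have hj : j = a := congrArg Prod.snd hteq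
  rw [hr, hj] at htL
  -- apply autotopism
  have h2 : (α c, α a, s) ∈ L := by
    have : (α c, α a, s) ∈ applyIso (α, α, (1 : Equiv.Perm (Fin n))) L :=
      Finset.mem_image.mpr ⟨(c, a, s), htL, rfl⟩
    rwa [haut] at this
  rw [hαc, hαa] at h2
  have := (hPLS (c, a, s) htL (c, b, s) h2).2.1 ⟨rfl, rfl⟩
  have : a = b := congrArg (fun t : Fin n × Fin n × Fin n => t.2.1) this
  exact hab this

/-- for `n > 2`, a transposition acting on rows and columns (identity on
symbols) is an autotopism of a non-empty partial Latin square but of no Latin square;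
consequently Latin square autotopisms form a proper subset of partial Latin square
autotopisms. -/
theorem stmt3 (n : ℕ) (hn : 2 < n) (α : Equiv.Perm (Fin n)) (hα : α.IsSwap) :
    IsAutPLS (α, α, (1 : Equiv.Perm (Fin n))) ∧
    (¬ ∃ L : Finset (Fin n × Fin n × Fin n),
        IsLS L ∧ IsAutotopism (α, α, (1 : Equiv.Perm (Fin n))) L) ∧
    {Θ : Iso n | ∃ L, IsLS L ∧ IsAutotopism Θ L} ⊂ {Θ : Iso n | IsAutPLS Θ} := by
  obtain ⟨a, b, hab, hα'⟩ := hα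
  have h1 := aux_autPLS α a b hab hα'
  have h2 := aux_noLS hn α a b hab hα'
  refine ⟨h1, h2, ?_⟩
  rw [Set.ssubset_iff_subset_ne]
  constructor
  · rintro Θ ⟨L, ⟨hPLS, hcard⟩, haut⟩
    refine ⟨L, ?_, hPLS, haut⟩
    rw [← Finset.card_pos, hcard]
    positivity
  · intro heq
    have hmem : (α, α, (1 : Equiv.Perm (Fin n))) ∈ {Θ : Iso n | IsAutPLS Θ} := h1
    rw [← heq] at hmem
    exact h2 hmem
end

section
/- Let Θ = (α,β,γ) ∈ Sₙ³ and let P be a partial Latin square of order n with Θ as an autotopism. Let B be the block of P consisting of the triples (r,c,s) ∈ O(P) with r in a fixed i-cycle of α and c in a fixed j-cycle of β. Then the size |B| is a multiple of lcm(i,j), and |B| = ω·lcm(i,j) for some ω with 0 ≤ ω ≤ gcd(i,j). -/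
open scoped Classical

/-! A partial Latin square has at most one symbol per cell, so a block has as many triples as
filled cells. These cells lie in the product of an `i`-cycle of `α` and a `j`-cycle of `β` and
are permuted by `(r, c) ↦ (α r, β c)`, whose orbits there all have size `lcm i j`. Hence the
block is a union of `ω` such orbits, and `ω · lcm i j ≤ i j = gcd i j · lcm i j`. -/

open Finset Function

namespace Equiv.Perm

theorem mem_orbit_zpowers_iff_sameCycle {α : Type*} {f : Perm α} {x y : α} :
    y ∈ MulAction.orbit (Subgroup.zpowers f) x ↔ f.SameCycle x y := by
  simp only [MulAction.mem_orbit_iff, Subtype.exists, Subgroup.mem_zpowers_iff]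
  exact ⟨fun ⟨_, ⟨k, rfl⟩, h⟩ => ⟨k, h⟩, fun ⟨k, h⟩ => ⟨_, ⟨k, rfl⟩, h⟩⟩

theorem SameCycle.mem_of_mapsTo {α : Type*} [Finite α] {f : Perm α} {s : Set α}
    (hs : Set.MapsTo f s s) {x y : α} (h : f.SameCycle x y) (hx : x ∈ s) : y ∈ s := by
  obtain ⟨k, rfl⟩ := h.exists_nat_pow_eq
  rw [coe_pow]
  exact hs.iterate k hx

variable {α : Type*} [Fintype α] [DecidableEq α] {f : Perm α}

theorem card_sameCycle_eq_minimalPeriod (f : Perm α) (x : α) :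
    #(univ.filter fun y => f.SameCycle x y) = minimalPeriod f x := by
  calc #(univ.filter fun y => f.SameCycle x y) = Fintype.card {y // f.SameCycle x y} :=
        (Fintype.card_subtype _).symm
    _ = Fintype.card (MulAction.orbit (Subgroup.zpowers f) x) :=
        Fintype.card_congr (Equiv.subtypeEquivRight fun _ => mem_orbit_zpowers_iff_sameCycle.symm)
    _ = minimalPeriod f x := (MulAction.minimalPeriod_eq_card f x).symm

theorem SameCycle.filter_sameCycle_eq {x y : α} (h : f.SameCycle x y) :
    (univ.filter fun z => f.SameCycle y z) = univ.filter fun z => f.SameCycle x z := by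
  ext z
  simp only [mem_filter, mem_univ, true_and]
  exact ⟨h.trans, h.symm.trans⟩

theorem SameCycle.minimalPeriod_eq {x y : α} (h : f.SameCycle x y) :
    minimalPeriod f y = minimalPeriod f x := by
  rw [← card_sameCycle_eq_minimalPeriod, ← card_sameCycle_eq_minimalPeriod, h.filter_sameCycle_eq]

theorem mapsTo_filter_sameCycle (f : Perm α) (x : α) :
    Set.MapsTo f (univ.filter fun y => f.SameCycle x y) (univ.filter fun y => f.SameCycle x y) :=
  fun y hy => by simpa using hy

/-- `s` is a disjoint union of cycles of `f`, each of size `m`. -/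
theorem dvd_card_of_mapsTo {s : Finset α} {m : ℕ} (hs : Set.MapsTo f s s)
    (hm : ∀ x ∈ s, minimalPeriod f x = m) : m ∣ #s := by
  rw [card_eq_sum_card_image (fun x => (univ.filter fun y => f.SameCycle x y)) s]
  refine Finset.dvd_sum fun c hc => ?_
  obtain ⟨x, hx, rfl⟩ := mem_image.1 hc
  have hfiber : {z ∈ s | (univ.filter fun y => f.SameCycle z y) =
      univ.filter fun y => f.SameCycle x y} = univ.filter fun y => f.SameCycle x y := by
    ext z
    simp only [mem_filter, mem_univ, true_and]
    refine ⟨fun ⟨_, hz⟩ => ?_, fun hxz => ⟨hxz.mem_of_mapsTo hs hx, hxz.filter_sameCycle_eq⟩⟩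
    have hzz : z ∈ univ.filter fun y => f.SameCycle z y := mem_filter.2 ⟨mem_univ z, .refl f z⟩
    exact (mem_filter.1 (hz ▸ hzz)).2
  rw [hfiber, card_sameCycle_eq_minimalPeriod, hm x hx]

end Equiv.Perm

theorem Nat.exists_le_gcd_eq_mul_lcm {i j N : ℕ} (hdvd : Nat.lcm i j ∣ N) (hle : N ≤ i * j) :
    ∃ ω ≤ Nat.gcd i j, N = ω * Nat.lcm i j := by
  refine ⟨N / Nat.lcm i j, ?_, (Nat.div_mul_cancel hdvd).symm⟩
  rcases (Nat.lcm i j).eq_zero_or_pos with hL | hL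
  · simp [hL]
  · refine Nat.le_of_mul_le_mul_right ?_ hL
    calc N / Nat.lcm i j * Nat.lcm i j = N := Nat.div_mul_cancel hdvd
      _ ≤ i * j := hle
      _ = Nat.gcd i j * Nat.lcm i j := (Nat.gcd_mul_lcm i j).symm

section LatinSquare

variable {n : ℕ} {O : Finset (Fin n × Fin n × Fin n)}

theorem IsPLS.injOn_cell (hO : IsPLS O) :
    Set.InjOn (fun t : Fin n × Fin n × Fin n => (t.1, t.2.1)) O :=
  fun _ h₁ _ h₂ h => (hO _ h₁ _ h₂).1 (Prod.mk.inj h)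

theorem IsAutotopism.apply_mem {α β γ : Equiv.Perm (Fin n)} (h : IsAutotopism (α, β, γ) O)
    {t : Fin n × Fin n × Fin n} (ht : t ∈ O) : (α t.1, β t.2.1, γ t.2.2) ∈ O := by
  rw [← h]
  exact mem_image_of_mem _ ht

theorem card_orbitFinset_eq_minimalPeriod {π : Equiv.Perm (Fin n)} {a x : Fin n}
    (hx : x ∈ orbitFinset π a) : #(orbitFinset π a) = minimalPeriod π x := by
  rw [orbitFinset, Equiv.Perm.card_sameCycle_eq_minimalPeriod, (mem_filter.1 hx).2.minimalPeriod_eq]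

theorem card_block_le_mul (hO : IsPLS O) (A B : Finset (Fin n)) :
    #(O.filter fun t => t.1 ∈ A ∧ t.2.1 ∈ B) ≤ #A * #B := by
  rw [← card_product]
  exact card_le_card_of_injOn _ (fun t ht => mem_product.2 (mem_filter.1 ht).2)
    (hO.injOn_cell.mono (filter_subset _ _))

/-- The filled cells of the block are permuted by `(r, c) ↦ (α r, β c)`, under which each of
them has period `lcm i j`. -/
theorem lcm_dvd_card_block (hO : IsPLS O) {α β γ : Equiv.Perm (Fin n)}
    (haut : IsAutotopism (α, β, γ) O) (a b : Fin n) :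
    Nat.lcm #(orbitFinset α a) #(orbitFinset β b) ∣
      #(O.filter fun t => t.1 ∈ orbitFinset α a ∧ t.2.1 ∈ orbitFinset β b) := by
  rw [← card_image_of_injOn (hO.injOn_cell.mono (filter_subset _ _))]
  refine Equiv.Perm.dvd_card_of_mapsTo (f := Equiv.prodCongr α β) ?_ ?_
  · intro x hx
    obtain ⟨t, ht, rfl⟩ := mem_image.1 (mem_coe.1 hx)
    obtain ⟨htO, hta, htb⟩ := mem_filter.1 ht
    exact mem_image.2 ⟨_, mem_filter.2 ⟨haut.apply_mem htO,
      Equiv.Perm.mapsTo_filter_sameCycle α a hta, Equiv.Perm.mapsTo_filter_sameCycle β b htb⟩, rfl⟩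
  · intro x hx
    obtain ⟨t, ht, rfl⟩ := mem_image.1 hx
    obtain ⟨-, hta, htb⟩ := mem_filter.1 ht
    rw [Equiv.prodCongr_apply, minimalPeriod_prodMap, card_orbitFinset_eq_minimalPeriod hta,
      card_orbitFinset_eq_minimalPeriod htb]

end LatinSquare

/-- the size of a block of the `Θ`-decomposition of a partial Latin square
admitting `Θ = (α,β,γ)` as autotopism is `ω·lcm(i,j)` with `0 ≤ ω ≤ gcd(i,j)`, where `i`
and `j` are the lengths of the corresponding cycles of `α` and `β`. -/
theorem stmt6 (n : ℕ) (α β γ : Equiv.Perm (Fin n)) (O : Finset (Fin n × Fin n × Fin n))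
    (hpls : IsPLS O) (haut : IsAutotopism (α, β, γ) O) (a b : Fin n) :
    ∃ ω ≤ Nat.gcd (orbitFinset α a).card (orbitFinset β b).card,
      (O.filter fun t => t.1 ∈ orbitFinset α a ∧ t.2.1 ∈ orbitFinset β b).card =
        ω * Nat.lcm (orbitFinset α a).card (orbitFinset β b).card :=
  Nat.exists_le_gcd_eq_mul_lcm (lcm_dvd_card_block hpls haut a b) (card_block_le_mul hpls _ _)
end

section
/- Let Θ = (α,β,γ) ∈ Sₙ³ be an autotopism of a non-empty partial Latin square P of order n, and let i be a cycle length of α and j a cycle length of β such that there is no k ∈ [n] for which γ has a k-cycle and lcm(i,j) = lcm(i,k) = lcm(j,k) = lcm(i,j,k). Then the block of P with rows in any i-cycle of α and columns in any j-cycle of β is empty. -/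
open scoped Classical

lemma orbit_eq_of_sameCycle {n : ℕ} (f : Equiv.Perm (Fin n)) {a r : Fin n}
    (h : f.SameCycle a r) : orbitFinset f a = orbitFinset f r := by
  ext x
  simp only [orbitFinset, Finset.mem_filter, Finset.mem_univ, true_and]
  exact ⟨fun hx => h.symm.trans hx, fun hx => h.trans hx⟩

lemma orbit_of_fixed {n : ℕ} (f : Equiv.Perm (Fin n)) {x : Fin n}
    (h : f x = x) : orbitFinset f x = {x} := by
  ext y
  simp only [orbitFinset, Finset.mem_filter, Finset.mem_univ, true_and,
    Finset.mem_singleton]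
  constructor
  · rintro ⟨i, hi⟩
    rw [Equiv.Perm.zpow_apply_eq_self_of_apply_eq_self h] at hi
    exact hi.symm
  · rintro rfl; exact Equiv.Perm.SameCycle.refl _ _

lemma orbit_of_not_fixed {n : ℕ} (f : Equiv.Perm (Fin n)) {x : Fin n}
    (h : f x ≠ x) : orbitFinset f x = (f.cycleOf x).support := by
  ext y
  rw [Equiv.Perm.mem_support_cycleOf_iff]
  simp [orbitFinset, Equiv.Perm.mem_support, h]

lemma pow_apply_eq_self_iff_card_dvd {n : ℕ} (f : Equiv.Perm (Fin n)) (x : Fin n) (m : ℕ) :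
    (f ^ m) x = x ↔ (orbitFinset f x).card ∣ m := by
  by_cases h : f x = x
  · simp [orbit_of_fixed f h, Equiv.Perm.pow_apply_eq_self_of_apply_eq_self h]
  · have hcyc := f.isCycle_cycleOf h
    rw [orbit_of_not_fixed f h, ← hcyc.orderOf]
    constructor
    · intro hm
      apply orderOf_dvd_of_pow_eq_one
      rw [hcyc.pow_eq_one_iff]
      exact ⟨x, by rwa [Equiv.Perm.cycleOf_apply_self],
        by rwa [Equiv.Perm.cycleOf_pow_apply_self]⟩
    · intro hm
      have h1 : (f.cycleOf x) ^ m = 1 := orderOf_dvd_iff_pow_eq_one.mp hm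
      rw [← Equiv.Perm.cycleOf_pow_apply_self, h1, Equiv.Perm.one_apply]

lemma hasCycle_orbit_card {n : ℕ} (f : Equiv.Perm (Fin n)) (x : Fin n) :
    HasCycle f (orbitFinset f x).card := by
  by_cases h : f x = x
  · rw [orbit_of_fixed f h]
    unfold HasCycle numCycles
    rw [Finset.card_singleton, if_pos rfl, Finset.card_pos]
    exact ⟨x, by simp [h]⟩
  · have h2 : 2 ≤ (f.cycleOf x).support.card := (f.isCycle_cycleOf h).two_le_card_support
    rw [orbit_of_not_fixed f h]
    unfold HasCycle numCycles
    rw [if_neg (by omega), Multiset.count_pos, Equiv.Perm.cycleType_def, Multiset.mem_map]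
    refine ⟨f.cycleOf x, ?_, rfl⟩
    rw [← Finset.mem_def]
    exact Equiv.Perm.cycleOf_mem_cycleFactorsFinset_iff.mpr (Equiv.Perm.mem_support.mpr h)


/-- if no cycle length `k` of `γ` makes `(i,j,k)` admissible, then the
corresponding `i×j`-block of the `Θ`-decomposition is empty. -/
theorem stmt7 (n : ℕ) (α β γ : Equiv.Perm (Fin n)) (O : Finset (Fin n × Fin n × Fin n))
    (hpls : IsPLS O) (hne : O.Nonempty) (haut : IsAutotopism (α, β, γ) O) (a b : Fin n)
    (hk : ¬ ∃ k : ℕ, HasCycle γ k ∧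
        Admissible (orbitFinset α a).card (orbitFinset β b).card k) :
    (O.filter fun t => t.1 ∈ orbitFinset α a ∧ t.2.1 ∈ orbitFinset β b) = ∅ := by
  rw [Finset.eq_empty_iff_forall_notMem]
  rintro ⟨r, c, s⟩ hmem
  rw [Finset.mem_filter] at hmem
  obtain ⟨hO, hr, hc⟩ := hmem
  have hra : α.SameCycle a r := by
    simpa [orbitFinset] using hr
  have hcb : β.SameCycle b c := by
    simpa [orbitFinset] using hc
  set i := (orbitFinset α a).card with hi_def
  set j := (orbitFinset β b).card with hj_def
  set k := (orbitFinset γ s).card with hk_def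
  have hia : orbitFinset α a = orbitFinset α r := orbit_eq_of_sameCycle α hra
  have hjb : orbitFinset β b = orbitFinset β c := orbit_eq_of_sameCycle β hcb
  have hstep : ∀ t ∈ O, ((α t.1, β t.2.1, γ t.2.2) : Fin n × Fin n × Fin n) ∈ O := by
    intro t ht
    have : (α t.1, β t.2.1, γ t.2.2) ∈ applyIso (α, β, γ) O :=
      Finset.mem_image_of_mem _ ht
    rwa [haut] at this
  have hiter : ∀ m : ℕ, (((α ^ m) r, (β ^ m) c, (γ ^ m) s) : Fin n × Fin n × Fin n) ∈ O := by
    intro m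
    induction m with
    | zero => simpa using hO
    | succ m ih =>
      have := hstep _ ih
      simpa [pow_succ', Equiv.Perm.mul_apply] using this
  have hαr : ∀ m : ℕ, i ∣ m → (α ^ m) r = r := fun m hm =>
    (pow_apply_eq_self_iff_card_dvd α r m).mpr (by rw [← hia]; exact hm)
  have hβc : ∀ m : ℕ, j ∣ m → (β ^ m) c = c := fun m hm =>
    (pow_apply_eq_self_iff_card_dvd β c m).mpr (by rw [← hjb]; exact hm)
  have hγs : ∀ m : ℕ, k ∣ m → (γ ^ m) s = s := fun m hm =>
    (pow_apply_eq_self_iff_card_dvd γ s m).mpr hm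
  have key1 : ∀ m : ℕ, i ∣ m → j ∣ m → k ∣ m := by
    intro m him hjm
    have hmem := hiter m
    rw [hαr m him, hβc m hjm] at hmem
    have := (hpls _ hmem _ hO).1 ⟨rfl, rfl⟩
    have hs : (γ ^ m) s = s := congrArg (fun t => t.2.2) this
    exact (pow_apply_eq_self_iff_card_dvd γ s m).mp hs
  have key2 : ∀ m : ℕ, i ∣ m → k ∣ m → j ∣ m := by
    intro m him hkm
    have hmem := hiter m
    rw [hαr m him, hγs m hkm] at hmem
    have := (hpls _ hmem _ hO).2.1 ⟨rfl, rfl⟩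
    have hc' : (β ^ m) c = c := congrArg (fun t => t.2.1) this
    rw [hj_def, hjb]
    exact (pow_apply_eq_self_iff_card_dvd β c m).mp hc'
  have key3 : ∀ m : ℕ, j ∣ m → k ∣ m → i ∣ m := by
    intro m hjm hkm
    have hmem := hiter m
    rw [hβc m hjm, hγs m hkm] at hmem
    have := (hpls _ hmem _ hO).2.2 ⟨rfl, rfl⟩
    have hr' : (α ^ m) r = r := congrArg (fun t => t.1) this
    rw [hi_def, hia]
    exact (pow_apply_eq_self_iff_card_dvd α r m).mp hr'
  have hkij : k ∣ Nat.lcm i j := key1 _ (Nat.dvd_lcm_left _ _) (Nat.dvd_lcm_right _ _)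
  have hjik : j ∣ Nat.lcm i k := key2 _ (Nat.dvd_lcm_left _ _) (Nat.dvd_lcm_right _ _)
  have hijk : i ∣ Nat.lcm j k := key3 _ (Nat.dvd_lcm_left _ _) (Nat.dvd_lcm_right _ _)
  have h1 : Nat.lcm i j = Nat.lcm i k :=
    Nat.dvd_antisymm (Nat.lcm_dvd (Nat.dvd_lcm_left _ _) hjik)
      (Nat.lcm_dvd (Nat.dvd_lcm_left _ _) hkij)
  have h2 : Nat.lcm i j = Nat.lcm j k :=
    Nat.dvd_antisymm (Nat.lcm_dvd hijk (Nat.dvd_lcm_left _ _))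
      (Nat.lcm_dvd (Nat.dvd_lcm_right _ _) hkij)
  have h3 : Nat.lcm i j = Nat.lcm i (Nat.lcm j k) :=
    Nat.dvd_antisymm
      (Nat.lcm_dvd (Nat.dvd_lcm_left _ _)
        ((Nat.dvd_lcm_left _ _).trans (Nat.dvd_lcm_right _ _)))
      (Nat.lcm_dvd (Nat.dvd_lcm_left _ _) (h2 ▸ Nat.dvd_refl _))
  exact hk ⟨k, hasCycle_orbit_card γ s, h1, h2, h3⟩
end

section
/- Let Θ = (α,β,γ) ∈ Sₙ³ be an autotopism of a non-empty partial Latin square P of order n. Then the size of P is at least min{lcm(i,j) : α has an i-cycle, β has a j-cycle, and there exists k with γ having a k-cycle such that lcm(i,j)=lcm(i,k)=lcm(j,k)=lcm(i,j,k)}. -/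
open scoped Classical

/-- Auxiliary: every point lies on a cycle whose length `i` satisfies
`(π ^ m) a = a ↔ i ∣ m`. -/
lemma stmt8_key {n : ℕ} (π : Equiv.Perm (Fin n)) (a : Fin n) :
    ∃ i, HasCycle π i ∧ ∀ m, (π ^ m) a = a ↔ i ∣ m := by
  by_cases h : π a = a
  · refine ⟨1, ?_, fun m => ?_⟩
    · have : a ∈ Finset.univ.filter fun x => π x = x := by simp [h]
      simp only [HasCycle, numCycles, if_pos rfl]
      exact Finset.card_pos.mpr ⟨a, this⟩
    · simp [Equiv.Perm.pow_apply_eq_self_of_apply_eq_self h m]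
  · have hmem : a ∈ π.support := Equiv.Perm.mem_support.mpr h
    refine ⟨(π.cycleOf a).support.card, ?_, fun m => ?_⟩
    · have h2 : 2 ≤ (π.cycleOf a).support.card :=
        Equiv.Perm.two_le_card_support_cycleOf_iff.mpr h
      have hne1 : (π.cycleOf a).support.card ≠ 1 := by omega
      simp only [HasCycle, numCycles, if_neg hne1]
      rw [Multiset.count_pos, Equiv.Perm.cycleType_def]
      refine Multiset.mem_map.mpr ⟨π.cycleOf a, ?_, rfl⟩
      exact Equiv.Perm.cycleOf_mem_cycleFactorsFinset_iff.mpr hmem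
    · have hcy := π.isCycleOn_support_cycleOf a
      have ha : a ∈ (π.cycleOf a).support :=
        Equiv.Perm.mem_support_cycleOf_iff.mpr ⟨Equiv.Perm.SameCycle.refl _ _, hmem⟩
      exact hcy.pow_apply_eq ha

/-- the size of a non-empty partial Latin square admitting `Θ = (α,β,γ)` as
autotopism is at least the minimum of `lcm(i,j)` over admissible pairs of cycle lengths;
equivalently, some admissible triple of cycle lengths satisfies `lcm(i,j) ≤ |O|`. -/
theorem stmt8 (n : ℕ) (α β γ : Equiv.Perm (Fin n)) (O : Finset (Fin n × Fin n × Fin n))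
    (hpls : IsPLS O) (hne : O.Nonempty) (haut : IsAutotopism (α, β, γ) O) :
    ∃ i j k : ℕ, HasCycle α i ∧ HasCycle β j ∧ HasCycle γ k ∧ Admissible i j k ∧
      Nat.lcm i j ≤ O.card := by
  obtain ⟨⟨r, c, s⟩, hrcs⟩ := hne
  obtain ⟨i, hci, hi⟩ := stmt8_key α r
  obtain ⟨j, hcj, hj⟩ := stmt8_key β c
  obtain ⟨k, hck, hk⟩ := stmt8_key γ s
  -- forward step from the autotopism
  have hstep : ∀ t ∈ O, (α t.1, β t.2.1, γ t.2.2) ∈ O := by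
    intro t ht
    have : (α t.1, β t.2.1, γ t.2.2) ∈ applyIso (α, β, γ) O :=
      Finset.mem_image.mpr ⟨t, ht, rfl⟩
    rwa [haut] at this
  have horbit : ∀ m : ℕ, ((α ^ m) r, (β ^ m) c, (γ ^ m) s) ∈ O := by
    intro m
    induction m with
    | zero => simpa using hrcs
    | succ m ih =>
        have := hstep _ ih
        simpa [pow_succ', Equiv.Perm.mul_apply] using this
  -- membership-forcing: if two coordinates return, so does the third
  have hforce : ∀ m : ℕ, i ∣ m → j ∣ m → k ∣ m := by
    intro m him hjm
    have ht := horbit m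
    have h1 : (α ^ m) r = r := (hi m).mpr him
    have h2 : (β ^ m) c = c := (hj m).mpr hjm
    have := ((hpls _ ht _ hrcs).1 ⟨h1, h2⟩)
    have h3 : (γ ^ m) s = s := by
      have := congrArg (fun t => t.2.2) this
      simpa using this
    exact (hk m).mp h3
  have hforce2 : ∀ m : ℕ, i ∣ m → k ∣ m → j ∣ m := by
    intro m him hkm
    have ht := horbit m
    have h1 : (α ^ m) r = r := (hi m).mpr him
    have h3 : (γ ^ m) s = s := (hk m).mpr hkm
    have := ((hpls _ ht _ hrcs).2.1 ⟨h1, h3⟩)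
    have h2 : (β ^ m) c = c := by
      have := congrArg (fun t => t.2.1) this
      simpa using this
    exact (hj m).mp h2
  have hforce3 : ∀ m : ℕ, j ∣ m → k ∣ m → i ∣ m := by
    intro m hjm hkm
    have ht := horbit m
    have h2 : (β ^ m) c = c := (hj m).mpr hjm
    have h3 : (γ ^ m) s = s := (hk m).mpr hkm
    have := ((hpls _ ht _ hrcs).2.2 ⟨h2, h3⟩)
    have h1 : (α ^ m) r = r := by
      have := congrArg (fun t => t.1) this
      simpa using this
    exact (hi m).mp h1
  have hkij : k ∣ Nat.lcm i j :=
    hforce _ (Nat.dvd_lcm_left _ _) (Nat.dvd_lcm_right _ _)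
  have hjik : j ∣ Nat.lcm i k :=
    hforce2 _ (Nat.dvd_lcm_left _ _) (Nat.dvd_lcm_right _ _)
  have hijk : i ∣ Nat.lcm j k :=
    hforce3 _ (Nat.dvd_lcm_left _ _) (Nat.dvd_lcm_right _ _)
  refine ⟨i, j, k, hci, hcj, hck, ?_, ?_⟩
  · refine ⟨?_, ?_, ?_⟩
    · exact Nat.dvd_antisymm
        (Nat.lcm_dvd (Nat.dvd_lcm_left _ _) hjik)
        (Nat.lcm_dvd (Nat.dvd_lcm_left _ _) hkij)
    · exact Nat.dvd_antisymm
        (Nat.lcm_dvd hijk (Nat.dvd_lcm_left _ _))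
        (Nat.lcm_dvd (Nat.dvd_lcm_right _ _) hkij)
    · exact Nat.dvd_antisymm
        (Nat.lcm_dvd (Nat.dvd_lcm_left _ _)
          ((Nat.dvd_lcm_left _ _).trans (Nat.dvd_lcm_right _ _)))
        (Nat.lcm_dvd (Nat.dvd_lcm_left _ _)
          (Nat.lcm_dvd (Nat.dvd_lcm_right _ _) hkij))
  · -- cardinality bound via the orbit of the starting triple
    set L := Nat.lcm i j with hL
    have hsub : (Finset.range L).image
        (fun m => ((α ^ m) r, (β ^ m) c, (γ ^ m) s)) ⊆ O := by
      intro t ht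
      obtain ⟨m, -, rfl⟩ := Finset.mem_image.mp ht
      exact horbit m
    have hkey : ∀ m m' : ℕ, m ≤ m' →
        ((α ^ m) r, (β ^ m) c, (γ ^ m) s) = ((α ^ m') r, (β ^ m') c, (γ ^ m') s) →
        L ∣ m' - m := by
      intro m m' hle heq
      have h1 : (α ^ m) r = (α ^ m') r := congrArg (fun t => t.1) heq
      have h2 : (β ^ m) c = (β ^ m') c := congrArg (fun t => t.2.1) heq
      set d := m' - m with hd
      have hm'' : m' = m + d := by omega
      have hα : (α ^ d) r = r := by
        have : (α ^ m) ((α ^ d) r) = (α ^ m) r := by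
          rw [← Equiv.Perm.mul_apply, ← pow_add, ← hm'', ← h1]
        exact (α ^ m).injective this
      have hβ : (β ^ d) c = c := by
        have : (β ^ m) ((β ^ d) c) = (β ^ m) c := by
          rw [← Equiv.Perm.mul_apply, ← pow_add, ← hm'', ← h2]
        exact (β ^ m).injective this
      exact Nat.lcm_dvd ((hi d).mp hα) ((hj d).mp hβ)
    have hinj : Set.InjOn (fun m => ((α ^ m) r, (β ^ m) c, (γ ^ m) s))
        (Finset.range L) := by
      intro m hm m' hm' heq
      simp only [Finset.coe_range, Set.mem_Iio] at hm hm'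
      rcases le_total m m' with hle | hle
      · have hdL := hkey m m' hle heq
        rcases Nat.eq_zero_or_pos (m' - m) with h0 | h0
        · omega
        · exact absurd (Nat.le_of_dvd h0 hdL) (by omega)
      · have hdL := hkey m' m hle heq.symm
        rcases Nat.eq_zero_or_pos (m - m') with h0 | h0
        · omega
        · exact absurd (Nat.le_of_dvd h0 hdL) (by omega)
    have hcard : ((Finset.range L).image
        (fun m => ((α ^ m) r, (β ^ m) c, (γ ^ m) s))).card = L := by
      rw [Finset.card_image_of_injOn hinj, Finset.card_range]
    calc L = _ := hcard.symm
      _ ≤ O.card := Finset.card_le_card hsub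
end

section
/- Let Θ = (α,β,id) ∈ Sₙ³ where α and β are both n-cycles and the third component is the identity. The number of partial Latin squares of order n of size s admitting Θ as an autotopism is (n!)² / (k!·((n−k)!)²) if s = k·n for some k ∈ [n], and 0 otherwise. -/
open scoped Classical

lemma exists_shift_equiv (n : ℕ) [NeZero n] (α : Equiv.Perm (Fin n))
    (hα : α.IsCycle) (hα' : α.support = Finset.univ) :
    ∃ e : ZMod n ≃ Fin n, ∀ t : ZMod n, α (e t) = e (t + 1) := by
  have hord : orderOf α = n := by
    rw [hα.orderOf, hα', Finset.card_univ, Fintype.card_fin]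
  have hmoved : ∀ x : Fin n, α x ≠ x := by
    intro x
    have : x ∈ α.support := hα' ▸ Finset.mem_univ x
    exact Equiv.Perm.mem_support.mp this
  have hpos : 0 < n := Nat.pos_of_ne_zero (NeZero.ne n)
  set a₀ : Fin n := ⟨0, hpos⟩ with ha₀
  set f : ZMod n → Fin n := fun t => (α ^ t.val) a₀ with hf
  have hmod : ∀ a b : ℕ, a ≡ b [MOD n] → α ^ a = α ^ b := by
    intro a b h
    rw [pow_eq_pow_iff_modEq, hord]
    exact h
  have hsurj : Function.Surjective f := by
    intro y
    obtain ⟨i, hi⟩ := hα.exists_pow_eq (hmoved a₀) (hmoved y)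
    refine ⟨(i : ZMod n), ?_⟩
    have : α ^ ((i : ZMod n)).val = α ^ i := by
      apply hmod
      rw [ZMod.val_natCast]
      exact Nat.mod_modEq i n
    show (α ^ ((i : ZMod n)).val) a₀ = y
    rw [this]; exact hi
  have hbij : Function.Bijective f := by
    rw [Fintype.bijective_iff_surjective_and_card]
    exact ⟨hsurj, by simp [ZMod.card]⟩
  refine ⟨Equiv.ofBijective f hbij, ?_⟩
  intro t
  show α (f t) = f (t + 1)
  have h1 : α ^ ((t + 1).val) = α ^ (1 + t.val) := by
    apply hmod
    calc (t + 1).val = (t.val + (1 : ZMod n).val) % n := ZMod.val_add t 1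
      _ ≡ t.val + (1 : ZMod n).val [MOD n] := Nat.mod_modEq _ n
      _ ≡ t.val + 1 % n [MOD n] := by rw [ZMod.val_one_eq_one_mod]
      _ ≡ t.val + 1 [MOD n] := Nat.ModEq.add_left _ (Nat.mod_modEq 1 n)
      _ = 1 + t.val := by omega
  simp only [hf, h1, pow_add, pow_one]
  rfl

def PInj {n : ℕ} (G : Finset (ZMod n × Fin n)) : Prop :=
  (∀ p ∈ G, ∀ q ∈ G, p.1 = q.1 → p = q) ∧ (∀ p ∈ G, ∀ q ∈ G, p.2 = q.2 → p = q)

lemma key_equiv (n : ℕ) [NeZero n] (α β : Equiv.Perm (Fin n))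
    (hα : α.IsCycle) (hα' : α.support = Finset.univ)
    (hβ : β.IsCycle) (hβ' : β.support = Finset.univ) (s : ℕ) :
    Nonempty ({O : Finset (Fin n × Fin n × Fin n) // IsPLS O ∧ O.card = s ∧
        IsAutotopism (α, β, (1 : Equiv.Perm (Fin n))) O} ≃
      {G : Finset (ZMod n × Fin n) // PInj G ∧ G.card * n = s}) := by
  obtain ⟨eα, heα⟩ := exists_shift_equiv n α hα hα'
  obtain ⟨eβ, heβ⟩ := exists_shift_equiv n β hβ hβ'
  have hcast : ∀ x : ZMod n, ((x.val : ℕ) : ZMod n) = x := fun x => by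
    rw [ZMod.natCast_val, ZMod.cast_id]
  have hpow : ∀ (γ : Equiv.Perm (Fin n)) (e : ZMod n ≃ Fin n),
      (∀ t, γ (e t) = e (t + 1)) → ∀ (m : ℕ) (t), (γ ^ m) (e t) = e (t + m) := by
    intro γ e he m
    induction m with
    | zero => intro t; simp
    | succ m ih =>
      intro t
      rw [pow_succ' γ m]
      show γ ((γ ^ m) (e t)) = _
      rw [ih, he]
      congr 1
      push_cast
      ring
  set ia := eα.symm with hia
  set ib := eβ.symm with hib
  set L : Fin n → Fin n → ZMod n := fun r c => ib c - ia r with hL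
  have hiaα : ∀ (m : ℕ) (r), ia ((α ^ m) r) = ia r + m := by
    intro m r
    have h := hpow α eα heα m (ia r)
    rw [Equiv.apply_symm_apply] at h
    rw [h, Equiv.symm_apply_apply]
  have hibβ : ∀ (m : ℕ) (c), ib ((β ^ m) c) = ib c + m := by
    intro m c
    have h := hpow β eβ heβ m (ib c)
    rw [Equiv.apply_symm_apply] at h
    rw [h, Equiv.symm_apply_apply]
  have hLshift : ∀ (m : ℕ) (r c), L ((α ^ m) r) ((β ^ m) c) = L r c := by
    intro m r c
    simp only [hL, hiaα, hibβ]
    ring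
  have hαreach : ∀ r r' : Fin n, (α ^ ((ia r' - ia r).val)) r = r' := by
    intro r r'
    have h := hpow α eα heα ((ia r' - ia r).val) (ia r)
    rw [Equiv.apply_symm_apply] at h
    rw [h, hcast]
    show eα (ia r + (ia r' - ia r)) = r'
    rw [add_sub_cancel, Equiv.apply_symm_apply]
  have hEx : ∀ r c r' c', L r c = L r' c' →
      ∃ m : ℕ, (α ^ m) r = r' ∧ (β ^ m) c = c' := by
    intro r c r' c' h
    refine ⟨(ia r' - ia r).val, hαreach r r', ?_⟩
    have h2 := hpow β eβ heβ ((ia r' - ia r).val) (ib c)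
    rw [Equiv.apply_symm_apply] at h2
    rw [h2, hcast]
    have h3 : ib c + (ia r' - ia r) = ib c' := by
      have h4 : ib c - ia r = ib c' - ia r' := h
      linear_combination h4
    rw [h3, Equiv.apply_symm_apply]
  -- the two maps
  set GO : Finset (Fin n × Fin n × Fin n) → Finset (ZMod n × Fin n) :=
    fun O => O.image (fun t => (L t.1 t.2.1, t.2.2)) with hGO
  set OG : Finset (ZMod n × Fin n) → Finset (Fin n × Fin n × Fin n) :=
    fun G => Finset.univ.filter (fun t => (L t.1 t.2.1, t.2.2) ∈ G) with hOG
  have hOGmem : ∀ (G) (t : Fin n × Fin n × Fin n),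
      t ∈ OG G ↔ (L t.1 t.2.1, t.2.2) ∈ G := by
    intro G t
    simp [hOG]
  -- invariance
  have hInv1 : ∀ O, IsAutotopism (α, β, (1 : Equiv.Perm (Fin n))) O →
      ∀ (r c : Fin n) (s' : Fin n), (r, c, s') ∈ O → (α r, β c, s') ∈ O := by
    intro O hA r c s' hmem
    have h1 : (α r, β c, (1 : Equiv.Perm (Fin n)) s') ∈
        applyIso (α, β, (1 : Equiv.Perm (Fin n))) O :=
      Finset.mem_image_of_mem _ hmem
    rw [hA] at h1
    simpa using h1
  have hInv : ∀ O, IsAutotopism (α, β, (1 : Equiv.Perm (Fin n))) O →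
      ∀ (m : ℕ) (r c s' : Fin n), (r, c, s') ∈ O → ((α ^ m) r, (β ^ m) c, s') ∈ O := by
    intro O hA m
    induction m with
    | zero => intro r c s' h; simpa using h
    | succ m ih =>
      intro r c s' h
      rw [pow_succ' α m, pow_succ' β m]
      exact hInv1 O hA _ _ _ (ih r c s' h)
  have hmemL : ∀ O, IsAutotopism (α, β, (1 : Equiv.Perm (Fin n))) O →
      ∀ (r c s' r' c' : Fin n), (r, c, s') ∈ O → L r c = L r' c' → (r', c', s') ∈ O := by
    intro O hA r c s' r' c' hmem hl
    obtain ⟨m, hm1, hm2⟩ := hEx r c r' c' hl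
    have := hInv O hA m r c s' hmem
    rwa [hm1, hm2] at this
  -- (3)
  have hOGO : ∀ O, IsAutotopism (α, β, (1 : Equiv.Perm (Fin n))) O → OG (GO O) = O := by
    intro O hA
    ext ⟨r, c, s'⟩
    rw [hOGmem]
    constructor
    · intro h
      obtain ⟨⟨r₁, c₁, u₁⟩, ht, heq⟩ := Finset.mem_image.mp h
      have hl : L r₁ c₁ = L r c := congrArg Prod.fst heq
      have hu : u₁ = s' := congrArg Prod.snd heq
      rw [← hu]
      exact hmemL O hA r₁ c₁ u₁ r c ht hl
    · intro h
      exact Finset.mem_image_of_mem _ h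
  -- (4)
  have hGOpinj : ∀ O, IsPLS O → IsAutotopism (α, β, (1 : Equiv.Perm (Fin n))) O →
      PInj (GO O) := by
    intro O hP hA
    constructor
    · rintro ⟨l₁, s₁⟩ hp ⟨l₂, s₂⟩ hq h12
      have h12' : l₁ = l₂ := h12
      obtain ⟨⟨r₁, c₁, u₁⟩, ht₁, heq₁⟩ := Finset.mem_image.mp hp
      obtain ⟨⟨r₂, c₂, u₂⟩, ht₂, heq₂⟩ := Finset.mem_image.mp hq
      have hl₁ : L r₁ c₁ = l₁ := congrArg Prod.fst heq₁
      have hu₁ : u₁ = s₁ := congrArg Prod.snd heq₁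
      have hl₂ : L r₂ c₂ = l₂ := congrArg Prod.fst heq₂
      have hu₂ : u₂ = s₂ := congrArg Prod.snd heq₂
      have h2 : (r₁, c₁, u₂) ∈ O :=
        hmemL O hA r₂ c₂ u₂ r₁ c₁ ht₂ (by rw [hl₂, ← h12', hl₁])
      have h3 := (hP _ ht₁ _ h2).1 ⟨rfl, rfl⟩
      have h4 : u₁ = u₂ := congrArg (fun t => t.2.2) h3
      rw [Prod.mk.injEq]
      exact ⟨h12', by rw [← hu₁, ← hu₂, h4]⟩
    · rintro ⟨l₁, s₁⟩ hp ⟨l₂, s₂⟩ hq h12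
      have h12' : s₁ = s₂ := h12
      obtain ⟨⟨r₁, c₁, u₁⟩, ht₁, heq₁⟩ := Finset.mem_image.mp hp
      obtain ⟨⟨r₂, c₂, u₂⟩, ht₂, heq₂⟩ := Finset.mem_image.mp hq
      have hl₁ : L r₁ c₁ = l₁ := congrArg Prod.fst heq₁
      have hu₁ : u₁ = s₁ := congrArg Prod.snd heq₁
      have hl₂ : L r₂ c₂ = l₂ := congrArg Prod.fst heq₂
      have hu₂ : u₂ = s₂ := congrArg Prod.snd heq₂
      set m := (ia r₁ - ia r₂).val with hm
      have hr : (α ^ m) r₂ = r₁ := hαreach r₂ r₁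
      have h2 : ((α ^ m) r₂, (β ^ m) c₂, u₂) ∈ O := hInv O hA m r₂ c₂ u₂ ht₂
      rw [hr] at h2
      have h3 := (hP _ ht₁ _ h2).2.1 ⟨rfl, hu₁.trans (h12'.trans hu₂.symm)⟩
      have hc : c₁ = (β ^ m) c₂ := congrArg (fun t => t.2.1) h3
      have h5 : l₁ = l₂ := by
        rw [← hl₁, ← hl₂, hc, ← hr, hLshift]
      rw [Prod.mk.injEq]
      exact ⟨h5, h12'⟩
  -- (5)
  have hGOG : ∀ G, GO (OG G) = G := by
    intro G
    have hl0 : ∀ l : ZMod n, L (eα 0) (eβ l) = l := by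
      intro l
      show ib (eβ l) - ia (eα 0) = l
      rw [hia, hib, Equiv.symm_apply_apply, Equiv.symm_apply_apply, sub_zero]
    ext ⟨l, s'⟩
    constructor
    · intro h
      obtain ⟨t, ht, heq⟩ := Finset.mem_image.mp h
      rw [hOGmem] at ht
      rwa [heq] at ht
    · intro h
      rw [Finset.mem_image]
      refine ⟨(eα 0, eβ l, s'), ?_, ?_⟩
      · rw [hOGmem]
        show (L (eα 0) (eβ l), s') ∈ G
        rw [hl0]
        exact h
      · show (L (eα 0) (eβ l), s') = (l, s')
        rw [hl0]
  -- (6)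
  have hOGpls : ∀ G, PInj G → IsPLS (OG G) := by
    intro G hG ⟨r₁, c₁, s₁⟩ h₁ ⟨r₂, c₂, s₂⟩ h₂
    rw [hOGmem] at h₁ h₂
    refine ⟨?_, ?_, ?_⟩
    · rintro ⟨hr, hc⟩
      have hr' : r₁ = r₂ := hr
      have hc' : c₁ = c₂ := hc
      subst hr'; subst hc'
      have h3 := hG.1 _ h₁ _ h₂ rfl
      have h4 : s₁ = s₂ := congrArg Prod.snd h3
      rw [h4]
    · rintro ⟨hr, hs⟩
      have hr' : r₁ = r₂ := hr
      have hs' : s₁ = s₂ := hs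
      subst hr'; subst hs'
      have h3 := hG.2 _ h₁ _ h₂ rfl
      have hl : L r₁ c₁ = L r₁ c₂ := congrArg Prod.fst h3
      have h5 : ib c₁ = ib c₂ := by
        have h6 : ib c₁ - ia r₁ = ib c₂ - ia r₁ := hl
        linear_combination h6
      rw [ib.injective h5]
    · rintro ⟨hc, hs⟩
      have hc' : c₁ = c₂ := hc
      have hs' : s₁ = s₂ := hs
      subst hc'; subst hs'
      have h3 := hG.2 _ h₁ _ h₂ rfl
      have hl : L r₁ c₁ = L r₂ c₁ := congrArg Prod.fst h3
      have h5 : ia r₁ = ia r₂ := by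
        have h6 : ib c₁ - ia r₁ = ib c₁ - ia r₂ := hl
        linear_combination -h6
      rw [ia.injective h5]
  -- (7)
  have hOGaut : ∀ G, IsAutotopism (α, β, (1 : Equiv.Perm (Fin n))) (OG G) := by
    intro G
    have hinj : Function.Injective
        (fun t : Fin n × Fin n × Fin n => (α t.1, β t.2.1, (1 : Equiv.Perm (Fin n)) t.2.2)) := by
      rintro ⟨a, b, c⟩ ⟨d, e, f⟩ h
      simp only [Prod.mk.injEq] at h
      exact Prod.ext (α.injective h.1) (Prod.ext (β.injective h.2.1) h.2.2)
    have hsub : applyIso (α, β, (1 : Equiv.Perm (Fin n))) (OG G) ⊆ OG G := by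
      intro t ht
      obtain ⟨⟨r, c, s'⟩, hu, heq⟩ := Finset.mem_image.mp ht
      rw [hOGmem] at hu
      rw [← heq, hOGmem]
      show (L (α r) (β c), (1 : Equiv.Perm (Fin n)) s') ∈ G
      have hl1 : L (α r) (β c) = L r c := by
        have := hLshift 1 r c
        simpa using this
      rw [hl1]
      exact hu
    have hcard : (applyIso (α, β, (1 : Equiv.Perm (Fin n))) (OG G)).card = (OG G).card :=
      Finset.card_image_of_injective _ hinj
    exact Finset.eq_of_subset_of_card_le hsub hcard.ge
  -- (8)
  have hOGcard : ∀ G, (OG G).card = G.card * n := by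
    intro G
    rw [Finset.card_eq_sum_card_fiberwise
      (f := fun t : Fin n × Fin n × Fin n => (L t.1 t.2.1, t.2.2)) (t := G)
      (fun t ht => (hOGmem G t).mp ht)]
    have hfib : ∀ g ∈ G, ((OG G).filter
        (fun t : Fin n × Fin n × Fin n => (L t.1 t.2.1, t.2.2) = g)).card = n := by
      intro g hg
      have himg : (OG G).filter (fun t : Fin n × Fin n × Fin n => (L t.1 t.2.1, t.2.2) = g)
          = Finset.univ.image (fun r : Fin n => (r, eβ (g.1 + ia r), g.2)) := by
        ext ⟨r, c, s'⟩
        rw [Finset.mem_filter, Finset.mem_image]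
        constructor
        · rintro ⟨hmem, heq⟩
          have hl : L r c = g.1 := congrArg Prod.fst heq
          have hs : s' = g.2 := congrArg Prod.snd heq
          refine ⟨r, Finset.mem_univ r, ?_⟩
          have hibc : ib c = g.1 + ia r := by
            have h6 : ib c - ia r = g.1 := hl
            linear_combination h6
          have hcc : eβ (g.1 + ia r) = c := by
            rw [← hibc, hib, Equiv.apply_symm_apply]
          rw [hcc, ← hs]
        · rintro ⟨r', -, heq⟩
          have hr : r' = r := congrArg Prod.fst heq
          have hc : eβ (g.1 + ia r') = c := congrArg (fun t => t.2.1) heq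
          have hs : g.2 = s' := congrArg (fun t => t.2.2) heq
          rw [hr] at hc
          have hlc : L r c = g.1 := by
            rw [← hc]
            show ib (eβ (g.1 + ia r)) - ia r = g.1
            rw [hib, Equiv.symm_apply_apply]
            ring
          constructor
          · rw [hOGmem]
            show (L r c, s') ∈ G
            rw [hlc, ← hs]
            simpa using hg
          · show (L r c, s') = g
            rw [hlc, ← hs]
      rw [himg, Finset.card_image_of_injective]
      · simp
      · intro a b h
        simpa using congrArg Prod.fst h
    rw [Finset.sum_congr rfl hfib, Finset.sum_const, smul_eq_mul]
  -- assemble the equivalence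
  have htoG : ∀ O : Finset (Fin n × Fin n × Fin n), O.card = s →
      IsAutotopism (α, β, (1 : Equiv.Perm (Fin n))) O → (GO O).card * n = s := by
    intro O hcard hA
    have h1 : OG (GO O) = O := hOGO O hA
    have h2 := hOGcard (GO O)
    rw [h1, hcard] at h2
    exact h2.symm
  exact ⟨{
    toFun := fun O => ⟨GO O.1, hGOpinj O.1 O.2.1 O.2.2.2, htoG O.1 O.2.2.1 O.2.2.2⟩
    invFun := fun G => ⟨OG G.1, hOGpls G.1 G.2.1, by rw [hOGcard]; exact G.2.2, hOGaut G.1⟩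
    left_inv := fun O => Subtype.ext (hOGO O.1 O.2.2.2)
    right_inv := fun G => Subtype.ext (hGOG G.1) }⟩

lemma nat_card_subtype {α : Type*} [Fintype α] (p : α → Prop) [DecidablePred p] :
    Nat.card {x // p x} = (Finset.univ.filter p).card := by
  have e : {x // p x} ≃ {x // x ∈ Finset.univ.filter p} :=
    Equiv.subtypeEquivRight (fun x => by simp)
  rw [Nat.card_congr e, Nat.card_eq_fintype_card, Fintype.card_coe]

lemma fiber_card {n : ℕ} (A : Finset (ZMod n)) :
    Nat.card {G : Finset (ZMod n × Fin n) // PInj G ∧ G.image Prod.fst = A} =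
      n.descFactorial A.card := by
  have h1 : ∀ g : (↥A ↪ Fin n),
      PInj (A.attach.image (fun a : ↥A => ((a : ZMod n), g a))) := by
    intro g
    constructor
    · intro p hp q hq h
      obtain ⟨a, -, ha⟩ := Finset.mem_image.mp hp
      obtain ⟨b, -, hb⟩ := Finset.mem_image.mp hq
      rw [← ha, ← hb] at h ⊢
      have hab : a = b := Subtype.ext (show ((a : ZMod n)) = ((b : ZMod n)) from h)
      rw [hab]
    · intro p hp q hq h
      obtain ⟨a, -, ha⟩ := Finset.mem_image.mp hp
      obtain ⟨b, -, hb⟩ := Finset.mem_image.mp hq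
      rw [← ha, ← hb] at h ⊢
      have hab : a = b := g.injective (show g a = g b from h)
      rw [hab]
  have h2 : ∀ g : (↥A ↪ Fin n),
      (A.attach.image (fun a : ↥A => ((a : ZMod n), g a))).image Prod.fst = A := by
    intro g
    rw [Finset.image_image]
    exact Finset.attach_image_val
  set Ψ : (↥A ↪ Fin n) → {G : Finset (ZMod n × Fin n) // PInj G ∧ G.image Prod.fst = A} :=
    fun g => ⟨A.attach.image (fun a : ↥A => ((a : ZMod n), g a)), h1 g, h2 g⟩ with hΨ
  have hbij : Function.Bijective Ψ := by
    constructor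
    · intro g₁ g₂ h
      have hset := congrArg Subtype.val h
      simp only [hΨ] at hset
      apply DFunLike.ext
      intro a
      have hmem : ((a : ZMod n), g₁ a) ∈
          A.attach.image (fun a : ↥A => ((a : ZMod n), g₂ a)) := by
        rw [← hset]
        exact Finset.mem_image_of_mem _ (Finset.mem_attach A a)
      obtain ⟨b, -, hb⟩ := Finset.mem_image.mp hmem
      have hba : b = a := Subtype.ext (congrArg Prod.fst hb)
      rw [hba] at hb
      exact (congrArg Prod.snd hb).symm
    · rintro ⟨G, ⟨hp1, hp2⟩, hdom⟩
      have hex : ∀ a : ↥A, ∃! q, q ∈ G ∧ q.1 = (a : ZMod n) := by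
        intro a
        have hmem : (a : ZMod n) ∈ G.image Prod.fst := hdom ▸ a.2
        obtain ⟨q, hq, hq1⟩ := Finset.mem_image.mp hmem
        refine ⟨q, ⟨hq, hq1⟩, ?_⟩
        rintro q' ⟨hq', hq1'⟩
        exact hp1 q' hq' q hq (hq1'.trans hq1.symm)
      set F : ↥A → ZMod n × Fin n :=
        fun a => Finset.choose (fun q => q.1 = (a : ZMod n)) G (hex a) with hF
      have hFmem : ∀ a, F a ∈ G :=
        fun a => Finset.choose_mem (fun q => q.1 = (a : ZMod n)) G (hex a)
      have hFfst : ∀ a, (F a).1 = (a : ZMod n) :=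
        fun a => Finset.choose_property (fun q => q.1 = (a : ZMod n)) G (hex a)
      have hginj : Function.Injective (fun a : ↥A => (F a).2) := by
        intro a b h
        have hFab : F a = F b := hp2 _ (hFmem a) _ (hFmem b) h
        apply Subtype.ext
        rw [← hFfst a, ← hFfst b, hFab]
      refine ⟨⟨fun a => (F a).2, hginj⟩, ?_⟩
      apply Subtype.ext
      show A.attach.image (fun a : ↥A => ((a : ZMod n), (F a).2)) = G
      ext p
      constructor
      · intro hp
        obtain ⟨a, -, ha⟩ := Finset.mem_image.mp hp
        have hFa : ((a : ZMod n), (F a).2) = F a := by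
          rw [← hFfst a]
        rw [← ha, hFa]
        exact hFmem a
      · intro hp
        have hpA : p.1 ∈ A := hdom ▸ Finset.mem_image_of_mem Prod.fst hp
        have hFp : F ⟨p.1, hpA⟩ = p := hp1 _ (hFmem _) _ hp (hFfst _)
        refine Finset.mem_image.mpr ⟨⟨p.1, hpA⟩, Finset.mem_attach _ _, ?_⟩
        rw [hFp]
  calc Nat.card {G : Finset (ZMod n × Fin n) // PInj G ∧ G.image Prod.fst = A}
      = Nat.card (↥A ↪ Fin n) := (Nat.card_eq_of_bijective Ψ hbij).symm
    _ = n.descFactorial A.card := by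
        rw [Nat.card_eq_fintype_card, Fintype.card_embedding_eq, Fintype.card_coe,
          Fintype.card_fin]

lemma count_PInj (n k : ℕ) [NeZero n] :
    Nat.card {G : Finset (ZMod n × Fin n) // PInj G ∧ G.card = k} =
      n.choose k * n.descFactorial k := by
  rw [nat_card_subtype]
  have hmaps : ∀ G ∈ Finset.univ.filter
      (fun G : Finset (ZMod n × Fin n) => PInj G ∧ G.card = k),
      G.image Prod.fst ∈ Finset.univ.filter (fun A : Finset (ZMod n) => A.card = k) := by
    intro G hG
    rw [Finset.mem_filter] at hG ⊢
    refine ⟨Finset.mem_univ _, ?_⟩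
    rw [Finset.card_image_of_injOn (fun p hp q hq h => hG.2.1.1 p hp q hq h)]
    exact hG.2.2
  rw [Finset.card_eq_sum_card_fiberwise hmaps]
  have hfib : ∀ A ∈ Finset.univ.filter (fun A : Finset (ZMod n) => A.card = k),
      ((Finset.univ.filter (fun G : Finset (ZMod n × Fin n) => PInj G ∧ G.card = k)).filter
        (fun G => G.image Prod.fst = A)).card = n.descFactorial k := by
    intro A hA
    have hAk : A.card = k := (Finset.mem_filter.mp hA).2
    have hfe : (Finset.univ.filter
          (fun G : Finset (ZMod n × Fin n) => PInj G ∧ G.card = k)).filter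
            (fun G => G.image Prod.fst = A) =
        Finset.univ.filter (fun G : Finset (ZMod n × Fin n) =>
          PInj G ∧ G.image Prod.fst = A) := by
      ext G
      simp only [Finset.mem_filter, Finset.mem_univ, true_and]
      constructor
      · rintro ⟨⟨hp, -⟩, him⟩
        exact ⟨hp, him⟩
      · rintro ⟨hp, him⟩
        refine ⟨⟨hp, ?_⟩, him⟩
        rw [← hAk, ← him]
        exact (Finset.card_image_of_injOn (fun p hp' q hq' h => hp.1 p hp' q hq' h)).symm
    rw [hfe, ← nat_card_subtype, fiber_card, hAk]
  rw [Finset.sum_congr rfl hfib, Finset.sum_const, smul_eq_mul]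
  congr 1
  rw [← nat_card_subtype, Nat.card_eq_fintype_card, Fintype.card_finset_len, ZMod.card]

lemma arith_count (n k : ℕ) (hkn : k ≤ n) :
    n.choose k * n.descFactorial k =
      n.factorial ^ 2 / (k.factorial * (n - k).factorial ^ 2) := by
  have h1 := Nat.choose_mul_factorial_mul_factorial hkn
  have h2 := Nat.factorial_mul_descFactorial hkn
  have hpos : 0 < k.factorial * (n - k).factorial ^ 2 := by positivity
  refine (Nat.div_eq_of_eq_mul_left hpos ?_).symm
  calc n.factorial ^ 2
      = (n.choose k * k.factorial * (n - k).factorial) *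
        ((n - k).factorial * n.descFactorial k) := by rw [h1, h2]; ring
    _ = n.choose k * n.descFactorial k * (k.factorial * (n - k).factorial ^ 2) := by ring

/-- for `Θ = (α, β, id)` with `α, β` `n`-cycles, the number of non-empty
partial Latin squares of size `s` admitting `Θ` is `(n!)²/(k!·((n−k)!)²)` if `s = k·n`
for some `k ∈ [n]`, and `0` otherwise. -/
theorem stmt11 (n s : ℕ) (hs : 1 ≤ s) (α β : Equiv.Perm (Fin n))
    (hα : α.IsCycle) (hα' : α.support = Finset.univ)
    (hβ : β.IsCycle) (hβ' : β.support = Finset.univ) :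
    (∀ k : ℕ, 1 ≤ k → k ≤ n → s = k * n →
      Set.ncard {O : Finset (Fin n × Fin n × Fin n) | IsPLS O ∧ O.card = s ∧
          IsAutotopism (α, β, (1 : Equiv.Perm (Fin n))) O} =
        n.factorial ^ 2 / (k.factorial * (n - k).factorial ^ 2)) ∧
    ((∀ k : ℕ, 1 ≤ k → k ≤ n → s ≠ k * n) →
      Set.ncard {O : Finset (Fin n × Fin n × Fin n) | IsPLS O ∧ O.card = s ∧
          IsAutotopism (α, β, (1 : Equiv.Perm (Fin n))) O} = 0) := by
  haveI : NeZero n := by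
    constructor
    rintro rfl
    obtain ⟨x, -⟩ := hα
    exact x.elim0
  have hnpos : 0 < n := Nat.pos_of_ne_zero (NeZero.ne n)
  obtain ⟨e⟩ := key_equiv n α β hα hα' hβ hβ' s
  have hbase : Set.ncard {O : Finset (Fin n × Fin n × Fin n) | IsPLS O ∧ O.card = s ∧
      IsAutotopism (α, β, (1 : Equiv.Perm (Fin n))) O} =
      Nat.card {G : Finset (ZMod n × Fin n) // PInj G ∧ G.card * n = s} := by
    rw [← Nat.card_coe_set_eq]
    exact Nat.card_congr e
  constructor
  · intro k hk1 hkn hskn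
    rw [hbase]
    have e2 : {G : Finset (ZMod n × Fin n) // PInj G ∧ G.card * n = s} ≃
        {G : Finset (ZMod n × Fin n) // PInj G ∧ G.card = k} := by
      apply Equiv.subtypeEquivRight
      intro G
      constructor
      · rintro ⟨hp, hc⟩
        exact ⟨hp, Nat.eq_of_mul_eq_mul_right hnpos (hc.trans hskn)⟩
      · rintro ⟨hp, hc⟩
        exact ⟨hp, by rw [hc, ← hskn]⟩
    rw [Nat.card_congr e2, count_PInj, arith_count n k hkn]
  · intro h
    rw [hbase]
    have : IsEmpty {G : Finset (ZMod n × Fin n) // PInj G ∧ G.card * n = s} := by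
      constructor
      rintro ⟨G, hp, hc⟩
      have hk1 : 1 ≤ G.card := by
        rcases Nat.eq_zero_or_pos G.card with h0 | h1
        · rw [h0, zero_mul] at hc
          omega
        · exact h1
      have hkn : G.card ≤ n := by
        have hinj : Set.InjOn Prod.fst ↑G := fun p hp' q hq' h' => hp.1 p hp' q hq' h'
        calc G.card = (G.image Prod.fst).card := (Finset.card_image_of_injOn hinj).symm
          _ ≤ Finset.univ.card := Finset.card_le_univ _
          _ = n := by rw [Finset.card_univ, ZMod.card]
      exact h G.card hk1 hkn hc.symm
    simp [Nat.card_of_isEmpty]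
end

section
/- Let Θ = (α,β,γ) ∈ Sₙ³ where α, β, γ are all n-cycles. The number of partial Latin squares of order n of size n admitting Θ as an autotopism is n². -/
open scoped Classical

section AuxStmt12

variable {n : ℕ}

lemma fullCycle_orderOf {α : Equiv.Perm (Fin n)} (hα : α.IsCycle)
    (hα' : α.support = Finset.univ) : orderOf α = n := by
  rw [hα.orderOf, hα', Finset.card_univ, Fintype.card_fin]

lemma fullCycle_dvd {α : Equiv.Perm (Fin n)} (hα : α.IsCycle)
    (hα' : α.support = Finset.univ) {k : ℕ} {r : Fin n} (h : (α ^ k) r = r) : n ∣ k := by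
  have hr : α r ≠ r := Equiv.Perm.mem_support.mp (by rw [hα']; exact Finset.mem_univ r)
  have h1 : α ^ k = 1 := (hα.pow_eq_one_iff' hr).mpr h
  rw [← fullCycle_orderOf hα hα']
  exact orderOf_dvd_of_pow_eq_one h1

lemma fullCycle_inj {α : Equiv.Perm (Fin n)} (hα : α.IsCycle)
    (hα' : α.support = Finset.univ) {k j : ℕ} (hk : k < n) (hj : j < n)
    {r : Fin n} (h : (α ^ k) r = (α ^ j) r) : k = j := by
  wlog hkj : k ≤ j generalizing k j
  · exact (this hj hk h.symm (le_of_not_ge hkj)).symm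
  have hfix : (α ^ (j - k)) ((α ^ k) r) = (α ^ k) r := by
    rw [← Equiv.Perm.mul_apply, ← pow_add, Nat.sub_add_cancel hkj, ← h]
  have hd := fullCycle_dvd hα hα' hfix
  have := Nat.eq_zero_of_dvd_of_lt hd
  omega

lemma fullCycle_pow_eq_one {α : Equiv.Perm (Fin n)} (hα : α.IsCycle)
    (hα' : α.support = Finset.univ) : α ^ n = 1 := by
  have := pow_orderOf_eq_one α
  rwa [fullCycle_orderOf hα hα'] at this

end AuxStmt12

/-- if `α, β, γ` are `n`-cycles, there are exactly `n²` partial Latin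
squares of size `n` admitting `(α,β,γ)` as autotopism. -/
theorem stmt12 (n : ℕ) (α β γ : Equiv.Perm (Fin n))
    (hα : α.IsCycle) (hα' : α.support = Finset.univ)
    (hβ : β.IsCycle) (hβ' : β.support = Finset.univ)
    (hγ : γ.IsCycle) (hγ' : γ.support = Finset.univ) :
    Set.ncard {O : Finset (Fin n × Fin n × Fin n) | IsPLS O ∧ O.card = n ∧
        IsAutotopism (α, β, γ) O} = n ^ 2 := by
  classical
  obtain ⟨x0, hx0, -⟩ := id hα
  have hpos : 0 < n := x0.pos
  have hαn := fullCycle_pow_eq_one hα hα'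
  have hβn := fullCycle_pow_eq_one hβ hβ'
  have hγn := fullCycle_pow_eq_one hγ hγ'
  set r0 : Fin n := ⟨0, hpos⟩ with hr0
  set iter : ℕ → Fin n × Fin n × Fin n → Fin n × Fin n × Fin n :=
    fun k t => ((α ^ k) t.1, (β ^ k) t.2.1, (γ ^ k) t.2.2) with hiter
  set orb : Fin n × Fin n × Fin n → Finset (Fin n × Fin n × Fin n) :=
    fun t => (Finset.range n).image (fun k => iter k t) with horb
  set Φ : Fin n × Fin n → Finset (Fin n × Fin n × Fin n) :=
    fun p => orb (r0, p.1, p.2) with hΦ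
  have hmem_orb : ∀ t u, u ∈ orb t ↔ ∃ k < n, iter k t = u := by
    intro t u
    simp [horb, Finset.mem_image, Finset.mem_range]
  -- cardinality of orbits
  have horbcard : ∀ t, (orb t).card = n := by
    intro t
    rw [horb]
    rw [Finset.card_image_of_injOn, Finset.card_range]
    intro k hk j hj h
    rw [Finset.mem_coe, Finset.mem_range] at hk hj
    have h1 : (α ^ k) t.1 = (α ^ j) t.1 := congrArg Prod.fst h
    exact fullCycle_inj hα hα' hk hj h1
  -- orbits are PLS
  have hPLS : ∀ t, IsPLS (orb t) := by
    intro t t1 ht1 t2 ht2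
    obtain ⟨k, hk, rfl⟩ := (hmem_orb t t1).mp ht1
    obtain ⟨j, hj, rfl⟩ := (hmem_orb t t2).mp ht2
    refine ⟨fun h => ?_, fun h => ?_, fun h => ?_⟩
    · rw [fullCycle_inj hα hα' hk hj h.1]
    · rw [fullCycle_inj hα hα' hk hj h.1]
    · rw [fullCycle_inj hβ hβ' hk hj h.1]
  -- orbits admit the autotopism
  have hstepinj : Function.Injective
      (fun t : Fin n × Fin n × Fin n => (α t.1, β t.2.1, γ t.2.2)) := by
    intro a b h
    simp only [Prod.mk.injEq] at h
    exact Prod.ext (α.injective h.1) (Prod.ext (β.injective h.2.1) (γ.injective h.2.2))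
  have happlycard : ∀ O : Finset (Fin n × Fin n × Fin n),
      (applyIso (α, β, γ) O).card = O.card := by
    intro O
    exact Finset.card_image_of_injective O hstepinj
  have hiter_mod : ∀ k t, iter k t = iter (k % n) t := by
    intro k t
    have e : ∀ (δ : Equiv.Perm (Fin n)), δ ^ n = 1 → δ ^ k = δ ^ (k % n) := by
      intro δ hδ
      conv_lhs => rw [← Nat.div_add_mod k n]
      rw [pow_add, pow_mul, hδ, one_pow, one_mul]
    simp only [hiter, e α hαn, e β hβn, e γ hγn]
  have hauto : ∀ t, IsAutotopism (α, β, γ) (orb t) := by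
    intro t
    have hsub : applyIso (α, β, γ) (orb t) ⊆ orb t := by
      intro u hu
      rw [applyIso, Finset.mem_image] at hu
      obtain ⟨v, hv, rfl⟩ := hu
      obtain ⟨k, hk, rfl⟩ := (hmem_orb t v).mp hv
      refine (hmem_orb t _).mpr ⟨(k + 1) % n, Nat.mod_lt _ hpos, ?_⟩
      rw [← hiter_mod]
      simp only [hiter, pow_succ', Equiv.Perm.mul_apply]
    have := happlycard (orb t)
    exact Finset.eq_of_subset_of_card_le hsub (by omega)
  -- any O in the set equals the orbit of any of its elements
  have hOrbEq : ∀ O : Finset (Fin n × Fin n × Fin n),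
      O.card = n → IsAutotopism (α, β, γ) O → ∀ t ∈ O, orb t = O := by
    intro O hcard hOa t ht
    have hstep : ∀ u ∈ O, (α u.1, β u.2.1, γ u.2.2) ∈ O := by
      intro u hu
      have : (α u.1, β u.2.1, γ u.2.2) ∈ applyIso (α, β, γ) O :=
        Finset.mem_image_of_mem _ hu
      rwa [hOa] at this
    have hiterO : ∀ k, iter k t ∈ O := by
      intro k
      induction k with
      | zero => simpa [hiter] using ht
      | succ k ih =>
        have := hstep _ ih
        simpa only [hiter, pow_succ', Equiv.Perm.mul_apply] using this
    have hsub : orb t ⊆ O := by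
      intro u hu
      obtain ⟨k, hk, rfl⟩ := (hmem_orb t u).mp hu
      exact hiterO k
    exact Finset.eq_of_subset_of_card_le hsub (by rw [hcard, horbcard])
  -- the set equals the range of Φ
  have hS : {O : Finset (Fin n × Fin n × Fin n) | IsPLS O ∧ O.card = n ∧
      IsAutotopism (α, β, γ) O} = Set.range Φ := by
    ext O
    simp only [Set.mem_setOf_eq, Set.mem_range]
    constructor
    · rintro ⟨hO1, hO2, hO3⟩
      have hne : O.Nonempty := Finset.card_pos.mp (by omega)
      obtain ⟨t, ht⟩ := hne
      have ht1 : α t.1 ≠ t.1 :=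
        Equiv.Perm.mem_support.mp (by rw [hα']; exact Finset.mem_univ _)
      have hr1 : α r0 ≠ r0 :=
        Equiv.Perm.mem_support.mp (by rw [hα']; exact Finset.mem_univ _)
      obtain ⟨k, hk⟩ := hα.exists_pow_eq ht1 hr1
      refine ⟨((β ^ k) t.2.1, (γ ^ k) t.2.2), ?_⟩
      have hu : iter k t ∈ O := by
        have := hOrbEq O hO2 hO3 t ht
        rw [← this]
        exact (hmem_orb t _).mpr ⟨k % n, Nat.mod_lt _ hpos, (hiter_mod k t).symm⟩
      have : (r0, (β ^ k) t.2.1, (γ ^ k) t.2.2) = iter k t := by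
        simp only [hiter]
        exact Prod.ext hk.symm rfl
      rw [hΦ]
      simp only
      rw [this]
      exact hOrbEq O hO2 hO3 _ (this ▸ hu)
    · rintro ⟨p, rfl⟩
      exact ⟨hPLS _, horbcard _, hauto _⟩
  have hΦinj : Function.Injective Φ := by
    intro p q h
    have hmem : (r0, p.1, p.2) ∈ Φ q := by
      rw [← h]
      exact (hmem_orb (r0, p.1, p.2) (r0, p.1, p.2)).mpr ⟨0, hpos, by simp [hiter]⟩
    obtain ⟨k, hk, hkeq⟩ := (hmem_orb (r0, q.1, q.2) (r0, p.1, p.2)).mp hmem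
    simp only [hiter, Prod.mk.injEq] at hkeq
    have hk0 : k = 0 := by
      have : (α ^ k) r0 = (α ^ 0) r0 := by simpa using hkeq.1
      exact fullCycle_inj hα hα' hk hpos this
    subst hk0
    simp only [pow_zero, Equiv.Perm.one_apply] at hkeq
    exact Prod.ext hkeq.2.1.symm hkeq.2.2.symm
  rw [hS, ← Nat.card_coe_set_eq, Nat.card_range_of_injective hΦinj]
  simp [Nat.card_eq_fintype_card, sq]
end

section
/- Let n > 2 and Θ = (α,β,γ) ∈ Sₙ³ where α, β, γ are all n-cycles. The number of partial Latin squares of order n of size 2n admitting Θ as an autotopism is n²(n−1)(n−2)/2. -/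
open scoped Classical

namespace Stmt13Aux

variable {n : ℕ}

lemma cyc_fix (π : Equiv.Perm (Fin n)) (h : π.IsCycle) (h' : π.support = Finset.univ)
    (x : Fin n) (k : ℕ) : (π ^ k) x = x ↔ n ∣ k := by
  have hc : π.IsCycleOn (↑(Finset.univ : Finset (Fin n))) := by
    have h2 := h.isCycleOn
    rwa [← Equiv.Perm.coe_support_eq_set_support, h'] at h2
  simpa using hc.pow_apply_eq (Finset.mem_univ x)

lemma cyc_order (π : Equiv.Perm (Fin n)) (h : π.IsCycle) (h' : π.support = Finset.univ) :
    orderOf π = n := by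
  rw [h.orderOf, h', Finset.card_univ, Fintype.card_fin]

lemma cyc_pow_eq (π : Equiv.Perm (Fin n)) (h : π.IsCycle) (h' : π.support = Finset.univ)
    (x : Fin n) {k j : ℕ} (hk : k < n) (hj : j < n) (he : (π ^ k) x = (π ^ j) x) : k = j := by
  wlog hkj : k ≤ j generalizing k j
  · exact (this hj hk he.symm (le_of_not_ge hkj)).symm
  have : (π ^ (j - k)) ((π ^ k) x) = (π ^ k) x := by
    rw [← Equiv.Perm.mul_apply, ← pow_add, Nat.sub_add_cancel hkj, he]
  rw [cyc_fix π h h' _ _] at this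
  rcases Nat.eq_zero_of_dvd_of_lt this (by omega) with h0
  omega


/-- A full-support cycle. -/
def FullCycle (π : Equiv.Perm (Fin n)) : Prop := π.IsCycle ∧ π.support = Finset.univ

lemma pow_tot {π : Equiv.Perm (Fin n)} (h : FullCycle π) {a b : ℕ} (hab : n ∣ a + b)
    (x : Fin n) : (π ^ a) ((π ^ b) x) = x := by
  rw [← Equiv.Perm.mul_apply, ← pow_add]
  exact (cyc_fix π h.1 h.2 x _).2 hab

lemma pow_inj {π : Equiv.Perm (Fin n)} (h : FullCycle π) (x : Fin n) {k j : ℕ}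
    (hk : k < n) (hj : j < n) (he : (π ^ k) x = (π ^ j) x) : k = j :=
  cyc_pow_eq π h.1 h.2 x hk hj he

/-- The Θ-orbit of the triple `(r0, p.1, p.2)`. -/
lemma mul_pred_add (hn : 0 < n) (k : ℕ) : k * (n - 1) + k = n * k := by
  have h1 : k * (n - 1) = k * n - k := by rw [Nat.mul_sub, mul_one]
  have h2 : k ≤ k * n := Nat.le_mul_of_pos_right _ hn
  rw [h1, Nat.sub_add_cancel h2, mul_comm]

/-- The Θ-orbit of the triple `(r0, p.1, p.2)`. -/
def orb (α β γ : Equiv.Perm (Fin n)) (r0 : Fin n) (p : Fin n × Fin n) :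
    Finset (Fin n × Fin n × Fin n) :=
  Finset.univ.image fun k : Fin n => ((α ^ (k : ℕ)) r0, (β ^ (k : ℕ)) p.1, (γ ^ (k : ℕ)) p.2)

lemma mem_orb {α β γ : Equiv.Perm (Fin n)} {r0 : Fin n} {p : Fin n × Fin n}
    {t : Fin n × Fin n × Fin n} :
    t ∈ orb α β γ r0 p ↔ ∃ k : Fin n,
      ((α ^ (k : ℕ)) r0, (β ^ (k : ℕ)) p.1, (γ ^ (k : ℕ)) p.2) = t := by
  simp [orb]

lemma orb_card {α β γ : Equiv.Perm (Fin n)} (hα : FullCycle α) (r0 : Fin n)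
    (p : Fin n × Fin n) : (orb α β γ r0 p).card = n := by
  rw [orb, Finset.card_image_of_injective _ (fun k j hkj => ?_), Finset.card_univ,
    Fintype.card_fin]
  have h1 : (α ^ (k : ℕ)) r0 = (α ^ (j : ℕ)) r0 := congrArg Prod.fst hkj
  exact Fin.ext (pow_inj hα r0 k.isLt j.isLt h1)

lemma orb_unique {α β γ : Equiv.Perm (Fin n)} (hα : FullCycle α) (hβ : FullCycle β)
    (hγ : FullCycle γ) {r0 : Fin n} {p q : Fin n × Fin n} {t : Fin n × Fin n × Fin n}
    (hp : t ∈ orb α β γ r0 p) (hq : t ∈ orb α β γ r0 q) : p = q := by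
  obtain ⟨k, hk⟩ := mem_orb.1 hp
  obtain ⟨j, hj⟩ := mem_orb.1 hq
  rw [← hj] at hk
  have h1 : (α ^ (k : ℕ)) r0 = (α ^ (j : ℕ)) r0 := congrArg Prod.fst hk
  have hkj : (k : ℕ) = (j : ℕ) := pow_inj hα r0 k.isLt j.isLt h1
  rw [hkj] at hk
  have h2 : (β ^ (j : ℕ)) p.1 = (β ^ (j : ℕ)) q.1 := congrArg (·.2.1) hk
  have h3 : (γ ^ (j : ℕ)) p.2 = (γ ^ (j : ℕ)) q.2 := congrArg (·.2.2) hk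
  exact Prod.ext ((Equiv.injective _) h2) ((Equiv.injective _) h3)

lemma theta_pow_mem {α β γ : Equiv.Perm (Fin n)} {O : Finset (Fin n × Fin n × Fin n)}
    (hO : IsAutotopism (α, β, γ) O) {t : Fin n × Fin n × Fin n} (ht : t ∈ O) (k : ℕ) :
    ((α ^ k) t.1, (β ^ k) t.2.1, (γ ^ k) t.2.2) ∈ O := by
  induction k with
  | zero => simpa using ht
  | succ m ih =>
      have : (α ((α ^ m) t.1), β ((β ^ m) t.2.1), γ ((γ ^ m) t.2.2)) ∈ applyIso (α, β, γ) O :=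
        Finset.mem_image_of_mem _ ih
      rw [hO] at this
      simpa [pow_succ', Equiv.Perm.mul_apply] using this

lemma orb_subset {α β γ : Equiv.Perm (Fin n)} (hn : 0 < n) (hα : FullCycle α)
    (hβ : FullCycle β) (hγ : FullCycle γ) {r0 : Fin n} {p : Fin n × Fin n}
    {O : Finset (Fin n × Fin n × Fin n)} (hO : IsAutotopism (α, β, γ) O)
    {t : Fin n × Fin n × Fin n} (htO : t ∈ O) (htp : t ∈ orb α β γ r0 p) :
    orb α β γ r0 p ⊆ O := by
  obtain ⟨k, hk⟩ := mem_orb.1 htp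
  have hbase : (r0, p.1, p.2) ∈ O := by
    have h1 := theta_pow_mem hO htO ((k : ℕ) * (n - 1))
    rw [← hk] at h1
    have e : ∀ (π : Equiv.Perm (Fin n)), FullCycle π → ∀ x : Fin n,
        (π ^ ((k : ℕ) * (n - 1))) ((π ^ (k : ℕ)) x) = x := by
      intro π hπ x
      refine pow_tot hπ ⟨(k : ℕ), by rw [mul_pred_add hn]⟩ x 
    simpa [e α hα, e β hβ, e γ hγ] using h1
  intro u hu
  obtain ⟨j, hj⟩ := mem_orb.1 hu
  have := theta_pow_mem hO hbase (j : ℕ)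
  rw [← hj]
  simpa using this

lemma exists_orb {α β γ : Equiv.Perm (Fin n)} (hn : 0 < n) (hα : FullCycle α)
    (hβ : FullCycle β) (hγ : FullCycle γ) (r0 : Fin n) (t : Fin n × Fin n × Fin n) :
    ∃ p, t ∈ orb α β γ r0 p := by
  have hsurj : Function.Surjective fun k : Fin n => (α ^ (k : ℕ)) r0 := by
    rw [← Finite.injective_iff_surjective]
    intro k j hkj
    exact Fin.ext (pow_inj hα r0 k.isLt j.isLt hkj)
  obtain ⟨k, hk⟩ := hsurj t.1
  refine ⟨((β ^ ((k : ℕ) * (n - 1))) t.2.1, (γ ^ ((k : ℕ) * (n - 1))) t.2.2), mem_orb.2 ⟨k, ?_⟩⟩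
  have e : ∀ (π : Equiv.Perm (Fin n)), FullCycle π → ∀ x : Fin n,
      (π ^ (k : ℕ)) ((π ^ ((k : ℕ) * (n - 1))) x) = x := by
    intro π hπ x
    refine pow_tot hπ ⟨(k : ℕ), by rw [add_comm, mul_pred_add hn]⟩ x 
  simp only [e β hβ, e γ hγ, hk]

lemma pow_mod {π : Equiv.Perm (Fin n)} (h : FullCycle π) (m : ℕ) : π ^ (m % n) = π ^ m := by
  have h2 := pow_mod_orderOf π m
  rwa [cyc_order π h.1 h.2] at h2

lemma base_mem (hn : 0 < n) {α β γ : Equiv.Perm (Fin n)} (r0 : Fin n) (p : Fin n × Fin n) :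
    (r0, p.1, p.2) ∈ orb α β γ r0 p :=
  mem_orb.2 ⟨⟨0, hn⟩, by simp⟩

/-- The compatibility condition on a pair of orbits. -/
def Good (β γ : Equiv.Perm (Fin n)) (p q : Fin n × Fin n) : Prop :=
  p.1 ≠ q.1 ∧ p.2 ≠ q.2 ∧ ∀ d : ℕ, ¬((β ^ d) q.1 = p.1 ∧ (γ ^ d) q.2 = p.2)

lemma good_symm (hn : 0 < n) {β γ : Equiv.Perm (Fin n)} (hβ : FullCycle β) (hγ : FullCycle γ)
    {p q : Fin n × Fin n} (g : Good β γ p q) : Good β γ q p := by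
  refine ⟨g.1.symm, g.2.1.symm, fun d ⟨h1, h2⟩ => g.2.2 (d * (n - 1)) ⟨?_, ?_⟩⟩
  · rw [← h1]; exact pow_tot hβ ⟨d, mul_pred_add hn d⟩ _
  · rw [← h2]; exact pow_tot hγ ⟨d, mul_pred_add hn d⟩ _

lemma good_ne {β γ : Equiv.Perm (Fin n)} {p q : Fin n × Fin n} (g : Good β γ p q) : p ≠ q :=
  fun e => g.1 (by rw [e])

lemma same_orb_eq {α β γ : Equiv.Perm (Fin n)} (hα : FullCycle α) (hβ : FullCycle β)
    (hγ : FullCycle γ) {r0 : Fin n} {p : Fin n × Fin n} {t1 t2 : Fin n × Fin n × Fin n}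
    (h1 : t1 ∈ orb α β γ r0 p) (h2 : t2 ∈ orb α β γ r0 p) :
    (t1.1 = t2.1 → t1 = t2) ∧ (t1.2.1 = t2.2.1 → t1 = t2) ∧ (t1.2.2 = t2.2.2 → t1 = t2) := by
  obtain ⟨k, hk⟩ := mem_orb.1 h1
  obtain ⟨j, hj⟩ := mem_orb.1 h2
  subst hk; subst hj
  refine ⟨fun e => ?_, fun e => ?_, fun e => ?_⟩
  · rw [pow_inj hα r0 k.isLt j.isLt e]
  · rw [pow_inj hβ p.1 k.isLt j.isLt e]
  · rw [pow_inj hγ p.2 k.isLt j.isLt e]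

lemma cross_ne (hn : 0 < n) {α β γ : Equiv.Perm (Fin n)} (hα : FullCycle α) (hβ : FullCycle β)
    (hγ : FullCycle γ) {r0 : Fin n} {p q : Fin n × Fin n} (g : Good β γ p q)
    {t1 t2 : Fin n × Fin n × Fin n}
    (h1 : t1 ∈ orb α β γ r0 p) (h2 : t2 ∈ orb α β γ r0 q) :
    ¬(t1.1 = t2.1 ∧ t1.2.1 = t2.2.1) ∧ ¬(t1.1 = t2.1 ∧ t1.2.2 = t2.2.2) ∧
      ¬(t1.2.1 = t2.2.1 ∧ t1.2.2 = t2.2.2) := by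
  obtain ⟨k, hk⟩ := mem_orb.1 h1
  obtain ⟨j, hj⟩ := mem_orb.1 h2
  subst hk; subst hj
  refine ⟨fun e => ?_, fun e => ?_, fun e => ?_⟩
  · have hkj := pow_inj hα r0 k.isLt j.isLt e.1
    rw [hkj] at e
    exact g.1 ((Equiv.injective _) e.2)
  · have hkj := pow_inj hα r0 k.isLt j.isLt e.1
    rw [hkj] at e
    exact g.2.1 ((Equiv.injective _) e.2)
  · obtain ⟨e1, e2⟩ := e
    simp only at e1 e2
    refine g.2.2 ((k : ℕ) * (n - 1) + (j : ℕ)) ⟨?_, ?_⟩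
    · rw [pow_add, Equiv.Perm.mul_apply, ← e1]
      exact pow_tot hβ ⟨(k : ℕ), mul_pred_add hn _⟩ _
    · rw [pow_add, Equiv.Perm.mul_apply, ← e2]
      exact pow_tot hγ ⟨(k : ℕ), mul_pred_add hn _⟩ _

lemma union_pls (hn : 0 < n) {α β γ : Equiv.Perm (Fin n)} (hα : FullCycle α) (hβ : FullCycle β)
    (hγ : FullCycle γ) {r0 : Fin n} {p q : Fin n × Fin n} (g : Good β γ p q) :
    IsPLS (orb α β γ r0 p ∪ orb α β γ r0 q) := by
  intro t1 h1 t2 h2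
  rcases Finset.mem_union.1 h1 with h1 | h1 <;> rcases Finset.mem_union.1 h2 with h2 | h2
  · obtain ⟨s1, s2, s3⟩ := same_orb_eq hα hβ hγ h1 h2
    exact ⟨fun e => s1 e.1, fun e => s1 e.1, fun e => s2 e.1⟩
  · obtain ⟨c1, c2, c3⟩ := cross_ne hn hα hβ hγ g h1 h2
    exact ⟨fun e => absurd e c1, fun e => absurd e c2, fun e => absurd e c3⟩
  · obtain ⟨c1, c2, c3⟩ := cross_ne hn hα hβ hγ (good_symm hn hβ hγ g) h1 h2
    exact ⟨fun e => absurd e c1, fun e => absurd e c2, fun e => absurd e c3⟩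
  · obtain ⟨s1, s2, s3⟩ := same_orb_eq hα hβ hγ h1 h2
    exact ⟨fun e => s1 e.1, fun e => s1 e.1, fun e => s2 e.1⟩

lemma orb_disjoint {α β γ : Equiv.Perm (Fin n)} (hα : FullCycle α) (hβ : FullCycle β)
    (hγ : FullCycle γ) {r0 : Fin n} {p q : Fin n × Fin n} (hpq : p ≠ q) :
    Disjoint (orb α β γ r0 p) (orb α β γ r0 q) := by
  rw [Finset.disjoint_left]
  intro t htp htq
  exact hpq (orb_unique hα hβ hγ htp htq)

lemma applyIso_orb (hn : 0 < n) {α β γ : Equiv.Perm (Fin n)} (hα : FullCycle α)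
    (hβ : FullCycle β) (hγ : FullCycle γ) (r0 : Fin n) (p : Fin n × Fin n) :
    applyIso (α, β, γ) (orb α β γ r0 p) = orb α β γ r0 p := by
  have hinj : Function.Injective fun t : Fin n × Fin n × Fin n => (α t.1, β t.2.1, γ t.2.2) := by
    intro a b h
    have e1 := congrArg Prod.fst h
    have e2 := congrArg (·.2.1) h
    have e3 := congrArg (·.2.2) h
    simp only at e1 e2 e3
    exact Prod.ext (α.injective e1) (Prod.ext (β.injective e2) (γ.injective e3))
  refine (Finset.eq_of_subset_of_card_le ?_ ?_).symm
  · intro t ht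
    obtain ⟨k, hk⟩ := mem_orb.1 ht
    have hkn : (k : ℕ) < n := k.isLt
    obtain ⟨m, hm⟩ : ∃ m, m = ((k : ℕ) + (n - 1)) % n := ⟨_, rfl⟩
    have hmn : m < n := hm ▸ Nat.mod_lt _ hn
    have hmod : (m + 1) % n = (k : ℕ) % n := by
      rw [hm, Nat.mod_add_mod]
      have e9 : (k : ℕ) + (n - 1) + 1 = (k : ℕ) + n := by omega
      rw [e9, Nat.add_mod_right]
    have comp : ∀ π : Equiv.Perm (Fin n), FullCycle π → ∀ x : Fin n,
        π ((π ^ m) x) = (π ^ (k : ℕ)) x := by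
      intro π hπ x
      rw [← Equiv.Perm.mul_apply, ← pow_succ', ← pow_mod hπ (m + 1), hmod, pow_mod hπ]
    have hmem : t ∈ (orb α β γ r0 p).image
        (fun t : Fin n × Fin n × Fin n => (α t.1, β t.2.1, γ t.2.2)) := by
      refine Finset.mem_image.2
        ⟨((α ^ m) r0, (β ^ m) p.1, (γ ^ m) p.2), mem_orb.2 ⟨⟨m, hmn⟩, rfl⟩, ?_⟩
      rw [← hk]
      simp only [comp α hα, comp β hβ, comp γ hγ]
    exact hmem
  · rw [applyIso, Finset.card_image_of_injective _ hinj]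

lemma S_char (hn2 : 2 < n) {α β γ : Equiv.Perm (Fin n)} (hα : FullCycle α) (hβ : FullCycle β)
    (hγ : FullCycle γ) (r0 : Fin n) (O : Finset (Fin n × Fin n × Fin n)) :
    (IsPLS O ∧ O.card = 2 * n ∧ IsAutotopism (α, β, γ) O) ↔
      ∃ p q, Good β γ p q ∧ O = orb α β γ r0 p ∪ orb α β γ r0 q := by
  have hn : 0 < n := by omega
  constructor
  · rintro ⟨hP, hc, hA⟩
    obtain ⟨t1, ht1⟩ : O.Nonempty := Finset.card_pos.1 (by omega)
    obtain ⟨p, hp⟩ := exists_orb hn hα hβ hγ r0 t1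
    have hsub1 : orb α β γ r0 p ⊆ O := orb_subset hn hα hβ hγ hA ht1 hp
    have hcd : (O \ orb α β γ r0 p).card = n := by
      rw [Finset.card_sdiff_of_subset hsub1, hc, orb_card hα]
      omega
    obtain ⟨t2, ht2⟩ : (O \ orb α β γ r0 p).Nonempty := Finset.card_pos.1 (by omega)
    obtain ⟨ht2O, ht2p⟩ := Finset.mem_sdiff.1 ht2
    obtain ⟨q, hq⟩ := exists_orb hn hα hβ hγ r0 t2
    have hsub2 : orb α β γ r0 q ⊆ O := orb_subset hn hα hβ hγ hA ht2O hq
    have hpq : p ≠ q := fun e => ht2p (e ▸ hq)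
    have hdisj := orb_disjoint hα hβ hγ (r0 := r0) hpq
    have hun : orb α β γ r0 p ∪ orb α β γ r0 q ⊆ O := Finset.union_subset hsub1 hsub2
    have hcard : (orb α β γ r0 p ∪ orb α β γ r0 q).card = 2 * n := by
      rw [Finset.card_union_of_disjoint hdisj, orb_card hα, orb_card hα]
      omega
    have hOU : O = orb α β γ r0 p ∪ orb α β γ r0 q :=
      (Finset.eq_of_subset_of_card_le hun (by omega)).symm
    have hbp : (r0, p.1, p.2) ∈ O := hsub1 (base_mem hn r0 p)
    have hbq : (r0, q.1, q.2) ∈ O := hsub2 (base_mem hn r0 q)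
    have g1 : p.1 ≠ q.1 := by
      intro e
      have := (hP _ hbp _ hbq).1 ⟨rfl, e⟩
      apply hpq
      exact Prod.ext (congrArg (·.2.1) this) (congrArg (·.2.2) this)
    have g2 : p.2 ≠ q.2 := by
      intro e
      have := (hP _ hbp _ hbq).2.1 ⟨rfl, e⟩
      apply hpq
      exact Prod.ext (congrArg (·.2.1) this) (congrArg (·.2.2) this)
    refine ⟨p, q, ⟨g1, g2, ?_⟩, hOU⟩
    rintro d ⟨e1, e2⟩
    have hu : ((α ^ d) r0, (β ^ d) q.1, (γ ^ d) q.2) ∈ O := theta_pow_mem hA hbq d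
    have := (hP _ hu _ hbp).2.2 ⟨e1, e2⟩
    have hr : (α ^ d) r0 = r0 := congrArg Prod.fst this
    have hd : n ∣ d := (cyc_fix α hα.1 hα.2 r0 d).1 hr
    apply g1
    rw [← e1, (cyc_fix β hβ.1 hβ.2 q.1 d).2 hd]
  · rintro ⟨p, q, g, rfl⟩
    have hdisj := orb_disjoint hα hβ hγ (r0 := r0) (good_ne g)
    refine ⟨union_pls hn hα hβ hγ g, ?_, ?_⟩
    · rw [Finset.card_union_of_disjoint hdisj, orb_card hα, orb_card hα]
      omega
    · show applyIso _ _ = _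
      rw [applyIso, Finset.image_union]
      rw [show ((orb α β γ r0 p).image fun t => (α t.1, β t.2.1, γ t.2.2)) =
        applyIso (α, β, γ) (orb α β γ r0 p) from rfl]
      rw [show ((orb α β γ r0 q).image fun t => (α t.1, β t.2.1, γ t.2.2)) =
        applyIso (α, β, γ) (orb α β γ r0 q) from rfl]
      rw [applyIso_orb hn hα hβ hγ, applyIso_orb hn hα hβ hγ]

lemma not_good_iff (hn : 0 < n) {β γ : Equiv.Perm (Fin n)} (hβ : FullCycle β) (hγ : FullCycle γ)
    (p y : Fin n × Fin n) :
    ¬ Good β γ p y ↔ p.1 = y.1 ∨ p.2 = y.2 ∨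
      ∃ d < n, (β ^ d) y.1 = p.1 ∧ (γ ^ d) y.2 = p.2 := by
  constructor
  · intro h
    by_contra hc
    push_neg at hc
    obtain ⟨c1, c2, c3⟩ := hc
    refine h ⟨c1, c2, fun d hd => ?_⟩
    refine c3 (d % n) (Nat.mod_lt _ hn) ?_ ?_
    · rw [pow_mod hβ]; exact hd.1
    · rw [pow_mod hγ]; exact hd.2
  · rintro (h | h | ⟨d, _, h1, h2⟩) g
    · exact g.1 h
    · exact g.2.1 h
    · exact g.2.2 d ⟨h1, h2⟩

lemma arith_id (hn2 : 2 < n) : (n - 1) * (n - 2) + (3 * n - 2) = n * n := by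
  obtain ⟨l, rfl⟩ : ∃ l, n = l + 2 := ⟨n - 2, by omega⟩
  have e1 : l + 2 - 1 = l + 1 := rfl
  have e2 : l + 2 - 2 = l := rfl
  have e3 : 3 * (l + 2) - 2 = 3 * l + 4 := by omega
  rw [e1, e2, e3]
  ring

lemma good_fiber_card (hn2 : 2 < n) {β γ : Equiv.Perm (Fin n)} (hβ : FullCycle β)
    (hγ : FullCycle γ) (y : Fin n × Fin n) :
    ((Finset.univ : Finset (Fin n × Fin n)).filter fun p => Good β γ p y).card =
      (n - 1) * (n - 2) := by
  have hn : 0 < n := by omega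
  set A := (Finset.univ : Finset (Fin n × Fin n)).filter (fun p => p.1 = y.1) with hA
  set B := (Finset.univ : Finset (Fin n × Fin n)).filter (fun p => p.2 = y.2) with hB
  set C := (Finset.range n).image (fun d => ((β ^ d) y.1, (γ ^ d) y.2)) with hC
  have cardA : A.card = n := by
    have : A = {y.1} ×ˢ (Finset.univ : Finset (Fin n)) := by
      ext p
      simp [hA, Finset.mem_product, Prod.ext_iff, eq_comm]
    rw [this, Finset.card_product, Finset.card_singleton, Finset.card_univ,
      Fintype.card_fin, one_mul]
  have cardB : B.card = n := by
    have : B = (Finset.univ : Finset (Fin n)) ×ˢ {y.2} := by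
      ext p
      simp [hB, Finset.mem_product, Prod.ext_iff, eq_comm]
    rw [this, Finset.card_product, Finset.card_singleton, Finset.card_univ,
      Fintype.card_fin, mul_one]
  have cardC : C.card = n := by
    rw [hC, Finset.card_image_of_injOn, Finset.card_range]
    intro d hd e he hde
    rw [Finset.mem_coe, Finset.mem_range] at hd he
    have h1 : (β ^ d) y.1 = (β ^ e) y.1 := congrArg Prod.fst hde
    exact pow_inj hβ y.1 hd he h1
  have hAB : A ∩ B = {y} := by
    ext p
    simp [hA, hB, Prod.ext_iff, Finset.mem_inter]
  have cardAB : (A ∪ B).card = 2 * n - 1 := by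
    have := Finset.card_union_add_card_inter A B
    rw [hAB, Finset.card_singleton, cardA, cardB] at this
    omega
  have hABC : (A ∪ B) ∩ C = {y} := by
    ext p
    simp only [Finset.mem_inter, Finset.mem_union, Finset.mem_singleton]
    constructor
    · rintro ⟨hab, hc⟩
      rw [hC, Finset.mem_image] at hc
      obtain ⟨d, hd, hdp⟩ := hc
      rw [Finset.mem_range] at hd
      have hd0 : d = 0 := by
        rcases hab with h | h
        · rw [hA, Finset.mem_filter] at h
          have e0 : (β ^ d) y.1 = p.1 := congrArg Prod.fst hdp
          have : (β ^ d) y.1 = y.1 := e0.trans h.2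
          have := (cyc_fix β hβ.1 hβ.2 y.1 d).1 this
          exact Nat.eq_zero_of_dvd_of_lt this hd |>.symm ▸ rfl
        · rw [hB, Finset.mem_filter] at h
          have e0 : (γ ^ d) y.2 = p.2 := congrArg Prod.snd hdp
          have : (γ ^ d) y.2 = y.2 := e0.trans h.2
          have := (cyc_fix γ hγ.1 hγ.2 y.2 d).1 this
          exact Nat.eq_zero_of_dvd_of_lt this hd |>.symm ▸ rfl
      subst hd0
      simp at hdp
      exact hdp.symm
    · rintro rfl
      refine ⟨Or.inl ?_, ?_⟩
      · rw [hA, Finset.mem_filter]; exact ⟨Finset.mem_univ _, rfl⟩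
      · rw [hC, Finset.mem_image]
        exact ⟨0, Finset.mem_range.2 hn, by simp⟩
  have cardBad : (A ∪ B ∪ C).card = 3 * n - 2 := by
    have := Finset.card_union_add_card_inter (A ∪ B) C
    rw [hABC, Finset.card_singleton, cardAB, cardC] at this
    omega
  have hBadEq : (Finset.univ : Finset (Fin n × Fin n)).filter (fun p => ¬ Good β γ p y) =
      A ∪ B ∪ C := by
    ext p
    simp only [Finset.mem_filter, Finset.mem_univ, true_and, Finset.mem_union,
      not_good_iff hn hβ hγ, hA, hB, hC, Finset.mem_image, Finset.mem_range]
    constructor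
    · rintro (h | h | ⟨d, hd, h1, h2⟩)
      · exact Or.inl (Or.inl (by simp [h]))
      · exact Or.inl (Or.inr (by simp [h]))
      · exact Or.inr ⟨d, hd, by rw [h1, h2]⟩
    · rintro ((h | h) | ⟨d, hd, h⟩)
      · exact Or.inl h
      · exact Or.inr (Or.inl h)
      · exact Or.inr (Or.inr ⟨d, hd, congrArg Prod.fst h, congrArg Prod.snd h⟩)
  have hTot := Finset.card_filter_add_card_filter_not
    (s := (Finset.univ : Finset (Fin n × Fin n))) (p := fun p => Good β γ p y)
  rw [hBadEq, cardBad, Finset.card_univ, Fintype.card_prod, Fintype.card_fin] at hTot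
  have := arith_id hn2
  omega

/-- The finset of good ordered pairs. -/
noncomputable def GoodPairs (β γ : Equiv.Perm (Fin n)) : Finset ((Fin n × Fin n) × (Fin n × Fin n)) :=
  Finset.univ.filter fun q => Good β γ q.1 q.2

lemma goodPairs_card (hn2 : 2 < n) {β γ : Equiv.Perm (Fin n)} (hβ : FullCycle β)
    (hγ : FullCycle γ) : (GoodPairs β γ).card = n * n * ((n - 1) * (n - 2)) := by
  rw [Finset.card_eq_sum_card_fiberwise (f := fun q => q.2) (t := Finset.univ)
    (fun x _ => Finset.mem_univ _)]
  have step : ∀ y ∈ (Finset.univ : Finset (Fin n × Fin n)),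
      ((GoodPairs β γ).filter fun q => q.2 = y).card = (n - 1) * (n - 2) := by
    intro y _
    have he : (GoodPairs β γ).filter (fun q => q.2 = y) =
        ((Finset.univ : Finset (Fin n × Fin n)).filter fun p => Good β γ p y) ×ˢ {y} := by
      ext q
      simp only [GoodPairs, Finset.mem_filter, Finset.mem_univ, true_and,
        Finset.mem_product, Finset.mem_singleton]
      constructor
      · rintro ⟨hg, rfl⟩; exact ⟨hg, rfl⟩
      · rintro ⟨hg, rfl⟩; exact ⟨hg, rfl⟩
    rw [he, Finset.card_product, Finset.card_singleton, mul_one, good_fiber_card hn2 hβ hγ]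
  rw [Finset.sum_congr rfl step, Finset.sum_const, Finset.card_univ, Fintype.card_prod,
    Fintype.card_fin, smul_eq_mul]

end Stmt13Aux


open Stmt13Aux in
/-- for `n > 2` and `α, β, γ` `n`-cycles, there are exactly
`n²(n−1)(n−2)/2` partial Latin squares of size `2n` admitting `(α,β,γ)` as autotopism. -/
theorem stmt13 (n : ℕ) (hn : 2 < n) (α β γ : Equiv.Perm (Fin n))
    (hα : α.IsCycle) (hα' : α.support = Finset.univ)
    (hβ : β.IsCycle) (hβ' : β.support = Finset.univ)
    (hγ : γ.IsCycle) (hγ' : γ.support = Finset.univ) :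
    Set.ncard {O : Finset (Fin n × Fin n × Fin n) | IsPLS O ∧ O.card = 2 * n ∧
        IsAutotopism (α, β, γ) O} = n ^ 2 * (n - 1) * (n - 2) / 2 := by
  have hn0 : 0 < n := by omega
  have hA : FullCycle α := ⟨hα, hα'⟩
  have hB : FullCycle β := ⟨hβ, hβ'⟩
  have hC : FullCycle γ := ⟨hγ, hγ'⟩
  set r0 : Fin n := ⟨0, hn0⟩ with hr0
  set S' := Finset.univ.filter (fun O : Finset (Fin n × Fin n × Fin n) =>
    IsPLS O ∧ O.card = 2 * n ∧ IsAutotopism (α, β, γ) O) with hS'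
  have hset : {O : Finset (Fin n × Fin n × Fin n) | IsPLS O ∧ O.card = 2 * n ∧
      IsAutotopism (α, β, γ) O} = ↑S' := by
    ext O; simp [hS']
  rw [hset, Set.ncard_coe_finset]
  have hmaps : ∀ q ∈ GoodPairs β γ, (orb α β γ r0 q.1 ∪ orb α β γ r0 q.2) ∈ S' := by
    intro q hq
    rw [hS', Finset.mem_filter]
    exact ⟨Finset.mem_univ _,
      (S_char hn hA hB hC r0 _).2 ⟨q.1, q.2, (Finset.mem_filter.1 hq).2, rfl⟩⟩
  have hPcard := Finset.card_eq_sum_card_fiberwise hmaps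
  have hfib : ∀ O ∈ S',
      ((GoodPairs β γ).filter fun q => orb α β γ r0 q.1 ∪ orb α β γ r0 q.2 = O).card = 2 := by
    intro O hO
    obtain ⟨p, q, g, rfl⟩ := (S_char hn hA hB hC r0 O).1 (Finset.mem_filter.1 hO).2
    have heq : (GoodPairs β γ).filter (fun a => orb α β γ r0 a.1 ∪ orb α β γ r0 a.2 =
        orb α β γ r0 p ∪ orb α β γ r0 q) = {(p, q), (q, p)} := by
      ext a
      simp only [Finset.mem_filter, GoodPairs, Finset.mem_univ, true_and,
        Finset.mem_insert, Finset.mem_singleton]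
      constructor
      · rintro ⟨hg, he⟩
        have h1 : (r0, a.1.1, a.1.2) ∈ orb α β γ r0 p ∪ orb α β γ r0 q := by
          rw [← he]; exact Finset.mem_union_left _ (base_mem hn0 r0 a.1)
        have h2 : (r0, a.2.1, a.2.2) ∈ orb α β γ r0 p ∪ orb α β γ r0 q := by
          rw [← he]; exact Finset.mem_union_right _ (base_mem hn0 r0 a.2)
        have c1 : a.1 = p ∨ a.1 = q := by
          rcases Finset.mem_union.1 h1 with h | h
          · exact Or.inl (orb_unique hA hB hC (base_mem hn0 r0 a.1) h)
          · exact Or.inr (orb_unique hA hB hC (base_mem hn0 r0 a.1) h)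
        have c2 : a.2 = p ∨ a.2 = q := by
          rcases Finset.mem_union.1 h2 with h | h
          · exact Or.inl (orb_unique hA hB hC (base_mem hn0 r0 a.2) h)
          · exact Or.inr (orb_unique hA hB hC (base_mem hn0 r0 a.2) h)
        have hne := good_ne hg
        rcases c1 with e1 | e1 <;> rcases c2 with e2 | e2
        · exact absurd (e1.trans e2.symm) hne
        · exact Or.inl (Prod.ext e1 e2)
        · exact Or.inr (Prod.ext e1 e2)
        · exact absurd (e1.trans e2.symm) hne
      · rintro (rfl | rfl)
        · exact ⟨g, rfl⟩
        · exact ⟨good_symm hn0 hB hC g, Finset.union_comm _ _⟩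
    rw [heq, Finset.card_insert_of_notMem, Finset.card_singleton]
    simp only [Finset.mem_singleton]
    intro e
    exact good_ne g (congrArg Prod.fst e)
  rw [Finset.sum_congr rfl hfib, Finset.sum_const, smul_eq_mul,
    goodPairs_card hn hB hC] at hPcard
  have hrr : n ^ 2 * (n - 1) * (n - 2) = n * n * ((n - 1) * (n - 2)) := by ring
  rw [hrr]
  omega
end

section
/- Let Θ = (α,β,γ) ∈ Sₙ³ be an autotopism of some non-empty partial Latin square, with cycle structure z = (z₁,z₂,z₃) where z_{ti} counts the i-cycles of the t-th component. Let 𝔩 be the minimum of lcm(i,j) over pairs (i,j) such that z_{1i} > 0, z_{2j} > 0, and there exists k with z_{3k} > 0 and (i,j,k) satisfying lcm(i,j)=lcm(i,k)=lcm(j,k)=lcm(i,j,k). Then the number of partial Latin squares of order n of size 𝔩 admitting Θ as an autotopism equals Σ over such pairs (i,j) with lcm(i,j)=𝔩 of z_{1i}·z_{2j}·gcd(i,j)·(Σ over k with (i,j,k) admissible of k·z_{3k}). -/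
open scoped Classical

/-!
Let `θ = α × β × γ` act on triples. The `θ`-orbit of a triple whose coordinates lie in cycles
of lengths `(i, j, k)` has `lcm(i, j, k)` elements, and it is a partial Latin square exactly when
`(i, j, k)` is admissible, i.e. when two coordinates of `θᵐ t` returning to those of `t` forces the
third to return; its size is then `lcm(i, j)`. A `θ`-invariant partial Latin square contains the
orbit of each of its triples, so by minimality of `l` the ones of size `l` are exactly the single
orbits of triples with admissible cycle lengths and `lcm(i, j) = l`. Counting these triples in
two ways (`l` per square, and `(i z₁ᵢ)(j z₂ⱼ)(k z₃ₖ)` per admissible `(i, j, k)`, since `i z₁ᵢ`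
points lie on `i`-cycles of `α`) and using `gcd(i, j) * lcm(i, j) = i * j` gives the formula.
-/

open Function Finset

namespace Function

variable {X : Type*} [DecidableEq X] (f : X → X) (x : X)

lemma mem_periodicOrbit_toFinset {y : X} :
    y ∈ (periodicOrbit f x).toFinset ↔ y ∈ periodicOrbit f x := by
  rw [periodicOrbit_def, Cycle.coe_toFinset, List.mem_toFinset, Cycle.mem_coe_iff]

lemma card_periodicOrbit_toFinset : #(periodicOrbit f x).toFinset = minimalPeriod f x := by
  rw [periodicOrbit_def, Cycle.coe_toFinset, List.toFinset_card_of_nodup, List.length_map,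
    List.length_range]
  exact Cycle.nodup_coe_iff.mp nodup_periodicOrbit

end Function

namespace Equiv.Perm

variable {X : Type*} [Fintype X] [DecidableEq X] {π : Perm X}

lemma minimalPeriod_eq_card_support_cycleOf {x : X} (hx : π x ≠ x) :
    minimalPeriod π x = #(π.cycleOf x).support := by
  have hmem : x ∈ (π.cycleOf x).support :=
    (mem_support_cycleOf_iff' hx).2 (SameCycle.refl _ _)
  refine eq_of_forall_dvd fun m => ?_
  rw [← isPeriodicPt_iff_minimalPeriod_dvd, IsPeriodicPt, IsFixedPt, ← coe_pow,
    (π.isCycleOn_support_cycleOf x).pow_apply_eq hmem]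

lemma card_filter_minimalPeriod_eq {i : ℕ} (hi : 2 ≤ i) :
    #{x | minimalPeriod π x = i} = i * π.cycleType.count i := by
  set C := π.cycleFactorsFinset.filter fun c => #c.support = i
  have hfib : ({x | minimalPeriod π x = i} : Finset X) = C.biUnion support := by
    ext x
    simp only [mem_filter, mem_univ, true_and, mem_biUnion, C]
    constructor
    · intro hx
      have hfix : π x ≠ x := fun h => by
        rw [minimalPeriod_eq_one_iff_isFixedPt.2 h] at hx; omega
      refine ⟨π.cycleOf x, ⟨cycleOf_mem_cycleFactorsFinset_iff.2 (mem_support.2 hfix), ?_⟩, ?_⟩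
      · rw [← minimalPeriod_eq_card_support_cycleOf hfix, hx]
      · exact (mem_support_cycleOf_iff' hfix).2 (SameCycle.refl _ _)
    · rintro ⟨c, ⟨hc, hci⟩, hxc⟩
      have hfix : π x ≠ x := mem_support.1 (mem_cycleFactorsFinset_support_le hc hxc)
      rw [minimalPeriod_eq_card_support_cycleOf hfix, ← cycle_is_cycleOf hxc hc, hci]
  have hcount : π.cycleType.count i = #C := by
    rw [cycleType_def, Multiset.count_map, card_def, filter_val]
    simp only [Function.comp_apply, eq_comm]
  rw [hfib, card_biUnion, sum_congr rfl fun c hc => (mem_filter.1 hc).2, sum_const, smul_eq_mul,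
    hcount, mul_comm]
  intro c hc d hd hcd
  exact (cycleFactorsFinset_pairwise_disjoint π (mem_filter.1 hc).1 (mem_filter.1 hd).1
    hcd).disjoint_support

end Equiv.Perm

lemma card_filter_triple_eq_sum {X Y Z : Type*} [Fintype X] [Fintype Y] [Fintype Z]
    (a : X → ℕ) (b : Y → ℕ) (c : Z → ℕ) {s : Finset ℕ} (ha : ∀ x, a x ∈ s) (hb : ∀ y, b y ∈ s)
    (hc : ∀ z, c z ∈ s) (P : ℕ → ℕ → ℕ → Prop) :
    #{t : X × Y × Z | P (a t.1) (b t.2.1) (c t.2.2)} =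
      ∑ i ∈ s, ∑ j ∈ s, ∑ k ∈ s,
        if P i j k then #{x | a x = i} * #{y | b y = j} * #{z | c z = k} else 0 := by
  have hmaps : Set.MapsTo (fun t : X × Y × Z => (a t.1, b t.2.1, c t.2.2))
      (({t | P (a t.1) (b t.2.1) (c t.2.2)} : Finset (X × Y × Z)) : Set (X × Y × Z))
      ((s ×ˢ s ×ˢ s : Finset (ℕ × ℕ × ℕ)) : Set (ℕ × ℕ × ℕ)) := fun t _ => by simp [ha, hb, hc]
  rw [card_eq_sum_card_fiberwise hmaps, sum_product]
  refine sum_congr rfl fun i _ => ?_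
  rw [sum_product]
  refine sum_congr rfl fun j _ => sum_congr rfl fun k _ => ?_
  split_ifs with h
  · rw [mul_assoc, ← card_product, ← card_product]
    refine congrArg card (ext fun ⟨x, y, z⟩ => ?_)
    simp only [mem_filter, mem_univ, true_and, mem_product, Prod.mk.injEq]
    exact ⟨And.right, fun hxyz => ⟨by rwa [hxyz.1, hxyz.2.1, hxyz.2.2], hxyz⟩⟩
  · refine card_eq_zero.2 (filter_eq_empty_iff.2 fun t ht hti => h ?_)
    simp only [mem_filter, mem_univ, true_and, Prod.mk.injEq] at ht hti
    rwa [hti.1, hti.2.1, hti.2.2] at ht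

section NumCycles

variable {n : ℕ} (π : Equiv.Perm (Fin n))

lemma card_filter_minimalPeriod_eq_mul_numCycles (i : ℕ) :
    #{x | minimalPeriod π x = i} = i * numCycles π i := by
  rcases lt_trichotomy i 1 with hi | rfl | hi
  · obtain rfl : i = 0 := by omega
    simp only [zero_mul, card_eq_zero, filter_eq_empty_iff, mem_univ, true_implies]
    exact fun x => (minimalPeriod_pos_of_mem_periodicPts (π.injective.mem_periodicPts x)).ne'
  · simp only [numCycles, if_true, one_mul, minimalPeriod_eq_one_iff_isFixedPt, IsFixedPt]
  · rw [numCycles, if_neg hi.ne', π.card_filter_minimalPeriod_eq hi]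

lemma pos_of_numCycles_pos {i : ℕ} (h : 0 < numCycles π i) : 0 < i := by
  refine Nat.pos_of_ne_zero fun hi => h.ne' ?_
  rw [hi, numCycles, if_neg zero_ne_one, Multiset.count_eq_zero]
  exact fun h => by simpa using π.two_le_of_mem_cycleType h

lemma numCycles_minimalPeriod_pos (x : Fin n) : 0 < numCycles π (minimalPeriod π x) := by
  have h : 0 < #{y | minimalPeriod π y = minimalPeriod π x} := card_pos.2 ⟨x, by simp⟩
  rw [card_filter_minimalPeriod_eq_mul_numCycles] at h
  exact pos_of_mul_pos_right h (Nat.zero_le _)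

lemma minimalPeriod_mem_Icc (x : Fin n) : minimalPeriod π x ∈ Icc 1 n := by
  refine mem_Icc.2 ⟨minimalPeriod_pos_of_mem_periodicPts (π.injective.mem_periodicPts x), ?_⟩
  simpa using minimalPeriod_le_card (f := π) (x := x)

end NumCycles

lemma admissible_iff_forall_dvd {i j k : ℕ} :
    Admissible i j k ↔ ∀ m, (i ∣ m → j ∣ m → k ∣ m) ∧ (i ∣ m → k ∣ m → j ∣ m) ∧
      (j ∣ m → k ∣ m → i ∣ m) := by
  simp only [Admissible, ← Nat.dvd_right_iff_eq, Nat.lcm_dvd_iff, ← forall_and]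
  exact forall_congr' fun m => by tauto

section Triples

variable {n : ℕ} (α β γ : Equiv.Perm (Fin n))

def tripleMap : Fin n × Fin n × Fin n → Fin n × Fin n × Fin n :=
  Prod.map α (Prod.map β γ)

def AdmissibleAt (t : Fin n × Fin n × Fin n) : Prop :=
  Admissible (minimalPeriod α t.1) (minimalPeriod β t.2.1) (minimalPeriod γ t.2.2)

def LatinCompatible (t₁ t₂ : Fin n × Fin n × Fin n) : Prop :=
  ((t₁.1 = t₂.1 ∧ t₁.2.1 = t₂.2.1) → t₁ = t₂) ∧
    ((t₁.1 = t₂.1 ∧ t₁.2.2 = t₂.2.2) → t₁ = t₂) ∧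
    ((t₁.2.1 = t₂.2.1 ∧ t₁.2.2 = t₂.2.2) → t₁ = t₂)

variable {α β γ}

lemma isPLS_iff {O : Finset (Fin n × Fin n × Fin n)} :
    IsPLS O ↔ ∀ t₁ ∈ O, ∀ t₂ ∈ O, LatinCompatible t₁ t₂ :=
  Iff.rfl

lemma latinCompatible_comm {t₁ t₂ : Fin n × Fin n × Fin n} :
    LatinCompatible t₁ t₂ ↔ LatinCompatible t₂ t₁ := by
  simp only [LatinCompatible, eq_comm]

lemma tripleMap_injective : Injective (tripleMap α β γ) :=
  α.injective.prodMap (β.injective.prodMap γ.injective)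

lemma isAutotopism_iff_mapsTo {O : Finset (Fin n × Fin n × Fin n)} :
    IsAutotopism (α, β, γ) O ↔ Set.MapsTo (tripleMap α β γ) O O := by
  refine ⟨fun h t ht => h ▸ mem_image_of_mem _ ht, fun h => ?_⟩
  have hsub : O.image (tripleMap α β γ) ⊆ O := image_subset_iff.2 h
  exact eq_of_subset_of_card_le hsub (card_image_of_injective _ tripleMap_injective).ge

lemma isAutotopism_periodicOrbit (t : Fin n × Fin n × Fin n) :
    IsAutotopism (α, β, γ) (periodicOrbit (tripleMap α β γ) t).toFinset := by
  have ht := tripleMap_injective.mem_periodicPts (f := tripleMap α β γ) t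
  refine isAutotopism_iff_mapsTo.2 fun u hu => ?_
  obtain ⟨m, rfl⟩ := (mem_periodicOrbit_iff ht).1 ((mem_periodicOrbit_toFinset _ _).1 hu)
  rw [mem_coe, mem_periodicOrbit_toFinset, ← iterate_succ_apply' (tripleMap α β γ) m t]
  exact iterate_mem_periodicOrbit ht _

lemma periodicOrbit_toFinset_subset {O : Finset (Fin n × Fin n × Fin n)} (hO : IsAutotopism (α, β, γ) O)
    {t : Fin n × Fin n × Fin n} (ht : t ∈ O) :
    (periodicOrbit (tripleMap α β γ) t).toFinset ⊆ O := by
  intro u hu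
  rw [mem_periodicOrbit_toFinset, mem_periodicOrbit_iff (tripleMap_injective.mem_periodicPts t)]
    at hu
  obtain ⟨m, rfl⟩ := hu
  exact (isAutotopism_iff_mapsTo.1 hO).iterate m ht

lemma minimalPeriod_tripleMap (t : Fin n × Fin n × Fin n) :
    minimalPeriod (tripleMap α β γ) t =
      Nat.lcm (minimalPeriod α t.1) (Nat.lcm (minimalPeriod β t.2.1) (minimalPeriod γ t.2.2)) := by
  rw [tripleMap, minimalPeriod_prodMap, minimalPeriod_prodMap]

lemma admissibleAt_iterate (t : Fin n × Fin n × Fin n) (m : ℕ) :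
    AdmissibleAt α β γ ((tripleMap α β γ)^[m] t) ↔ AdmissibleAt α β γ t := by
  simp only [AdmissibleAt, tripleMap, Prod.map_iterate, Prod.map_fst, Prod.map_snd]
  rw [minimalPeriod_apply_iterate (α.injective.mem_periodicPts _),
    minimalPeriod_apply_iterate (β.injective.mem_periodicPts _),
    minimalPeriod_apply_iterate (γ.injective.mem_periodicPts _)]

lemma admissibleAt_iff_forall_latinCompatible (t : Fin n × Fin n × Fin n) :
    AdmissibleAt α β γ t ↔ ∀ m, LatinCompatible ((tripleMap α β γ)^[m] t) t := by
  simp only [AdmissibleAt, LatinCompatible, admissible_iff_forall_dvd, tripleMap, Prod.map_iterate,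
    Prod.ext_iff, Prod.map_fst, Prod.map_snd, ← isPeriodicPt_iff_minimalPeriod_dvd, IsPeriodicPt,
    IsFixedPt]
  exact forall_congr' fun m => by tauto

lemma admissibleAt_of_isPLS {O : Finset (Fin n × Fin n × Fin n)} (hO : IsPLS O)
    (hAut : IsAutotopism (α, β, γ) O) {t : Fin n × Fin n × Fin n} (ht : t ∈ O) :
    AdmissibleAt α β γ t :=
  (admissibleAt_iff_forall_latinCompatible t).2 fun m =>
    isPLS_iff.1 hO _ ((isAutotopism_iff_mapsTo.1 hAut).iterate m ht) t ht

lemma isPLS_periodicOrbit {t : Fin n × Fin n × Fin n} (ht : AdmissibleAt α β γ t) :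
    IsPLS (periodicOrbit (tripleMap α β γ) t).toFinset := by
  have hper := tripleMap_injective.mem_periodicPts (f := tripleMap α β γ)
  refine isPLS_iff.2 fun t₁ h₁ t₂ h₂ => ?_
  rw [mem_periodicOrbit_toFinset, mem_periodicOrbit_iff (hper t)] at h₁
  obtain ⟨a, rfl⟩ := h₁
  rw [mem_periodicOrbit_toFinset, ← periodicOrbit_apply_iterate_eq (hper t) a,
    mem_periodicOrbit_iff (hper _)] at h₂
  obtain ⟨m, rfl⟩ := h₂
  rw [← admissibleAt_iterate t a, admissibleAt_iff_forall_latinCompatible] at ht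
  exact latinCompatible_comm.1 (ht m)

lemma card_periodicOrbit_of_admissibleAt {t : Fin n × Fin n × Fin n}
    (ht : AdmissibleAt α β γ t) :
    #(periodicOrbit (tripleMap α β γ) t).toFinset =
      Nat.lcm (minimalPeriod α t.1) (minimalPeriod β t.2.1) := by
  rw [card_periodicOrbit_toFinset, minimalPeriod_tripleMap, ← ht.2.2]

end Triples

section MinimalSize

variable {n : ℕ} (α β γ : Equiv.Perm (Fin n)) (l : ℕ)

noncomputable def admissibleTriples : Finset (Fin n × Fin n × Fin n) :=
  {t | AdmissibleAt α β γ t ∧ Nat.lcm (minimalPeriod α t.1) (minimalPeriod β t.2.1) = l}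

noncomputable def autotopicPLS : Finset (Finset (Fin n × Fin n × Fin n)) :=
  {O | IsPLS O ∧ #O = l ∧ IsAutotopism (α, β, γ) O}

lemma card_admissibleTriples :
    #(admissibleTriples α β γ l) =
      ∑ i ∈ Icc 1 n, ∑ j ∈ Icc 1 n,
        if Nat.lcm i j = l then
          i * numCycles α i * (j * numCycles β j) *
            ∑ k ∈ Icc 1 n, (if Admissible i j k then k * numCycles γ k else 0)
        else 0 := by
  convert card_filter_triple_eq_sum _ _ _ (minimalPeriod_mem_Icc α) (minimalPeriod_mem_Icc β)
    (minimalPeriod_mem_Icc γ) (fun i j k => Admissible i j k ∧ Nat.lcm i j = l) using 1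
  · -- the two filters differ only in their decidability instances
    unfold admissibleTriples AdmissibleAt
    congr
  simp only [card_filter_minimalPeriod_eq_mul_numCycles]
  refine sum_congr rfl fun i _ => sum_congr rfl fun j _ => ?_
  split_ifs with hl
  · simp only [hl, and_true, mul_sum, mul_ite, mul_zero]
  · simp [hl]

variable {α β γ l}

lemma mem_admissibleTriples {t : Fin n × Fin n × Fin n} :
    t ∈ admissibleTriples α β γ l ↔
      AdmissibleAt α β γ t ∧ Nat.lcm (minimalPeriod α t.1) (minimalPeriod β t.2.1) = l := by
  simp [admissibleTriples]

lemma periodicOrbit_toFinset_eq_of_mem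
    (hmin : ∀ i j k : ℕ, 0 < numCycles α i → 0 < numCycles β j → 0 < numCycles γ k →
      Admissible i j k → l ≤ Nat.lcm i j)
    {O : Finset (Fin n × Fin n × Fin n)} (hO : IsPLS O) (hcard : #O = l)
    (hAut : IsAutotopism (α, β, γ) O) {t : Fin n × Fin n × Fin n} (ht : t ∈ O) :
    (periodicOrbit (tripleMap α β γ) t).toFinset = O ∧ t ∈ admissibleTriples α β γ l := by
  have hadm := admissibleAt_of_isPLS hO hAut ht
  have hsub := periodicOrbit_toFinset_subset hAut ht
  have hlcm : Nat.lcm (minimalPeriod α t.1) (minimalPeriod β t.2.1) = l := by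
    refine le_antisymm ?_ (hmin _ _ _ (numCycles_minimalPeriod_pos α t.1)
      (numCycles_minimalPeriod_pos β t.2.1) (numCycles_minimalPeriod_pos γ t.2.2) hadm)
    rw [← card_periodicOrbit_of_admissibleAt hadm, ← hcard]
    exact card_le_card hsub
  refine ⟨eq_of_subset_of_card_le hsub ?_, mem_admissibleTriples.2 ⟨hadm, hlcm⟩⟩
  rw [card_periodicOrbit_of_admissibleAt hadm, hcard, hlcm]

lemma card_admissibleTriples_eq_mul
    (hmin : ∀ i j k : ℕ, 0 < numCycles α i → 0 < numCycles β j → 0 < numCycles γ k →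
      Admissible i j k → l ≤ Nat.lcm i j) :
    #(admissibleTriples α β γ l) = #(autotopicPLS α β γ l) * l := by
  have hmaps : Set.MapsTo (fun t => (periodicOrbit (tripleMap α β γ) t).toFinset)
      (admissibleTriples α β γ l) (autotopicPLS α β γ l) := by
    intro t ht
    obtain ⟨hadm, hl⟩ := mem_admissibleTriples.1 ht
    simpa [autotopicPLS, isPLS_periodicOrbit hadm, card_periodicOrbit_of_admissibleAt hadm, hl]
      using isAutotopism_periodicOrbit t
  rw [card_eq_sum_card_fiberwise hmaps, ← smul_eq_mul, ← sum_const]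
  refine sum_congr rfl fun O hO => ?_
  obtain ⟨hPLS, hcard, hAut⟩ := (mem_filter.1 hO).2
  refine (congrArg card ?_).trans hcard
  ext t
  simp only [mem_filter]
  refine ⟨fun ⟨_, horb⟩ => horb ▸ ?_, fun ht => ?_⟩
  · exact (mem_periodicOrbit_toFinset _ _).2
      (self_mem_periodicOrbit (tripleMap_injective.mem_periodicPts t))
  · obtain ⟨horb, hT⟩ := periodicOrbit_toFinset_eq_of_mem hmin hPLS hcard hAut ht
    exact ⟨hT, horb⟩

end MinimalSize

lemma ite_mul_lcm_eq (a b c : ℕ → ℕ) (s : Finset ℕ) (i j l : ℕ) :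
    (if 0 < a i ∧ 0 < b j ∧ Nat.lcm i j = l ∧ (∃ k : ℕ, 0 < c k ∧ Admissible i j k) then
        a i * b j * Nat.gcd i j * ∑ k ∈ s, (if Admissible i j k then k * c k else 0)
      else 0) * l =
      if Nat.lcm i j = l then
        i * a i * (j * b j) * ∑ k ∈ s, (if Admissible i j k then k * c k else 0)
      else 0 := by
  set S := ∑ k ∈ s, (if Admissible i j k then k * c k else 0)
  -- the positivity conditions in the guard only exclude summands that vanish anyway
  by_cases hl : Nat.lcm i j = l
  · subst hl
    rw [if_pos rfl]
    split_ifs with h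
    · calc a i * b j * Nat.gcd i j * S * Nat.lcm i j
          = Nat.gcd i j * Nat.lcm i j * (a i * b j * S) := by ring
        _ = i * a i * (j * b j) * S := by rw [Nat.gcd_mul_lcm]; ring
    · have hzero : a i * b j * S = 0 := by
        simp only [true_and, not_and, not_exists] at h
        rcases Nat.eq_zero_or_pos (a i) with ha | ha
        · simp [ha]
        rcases Nat.eq_zero_or_pos (b j) with hb | hb
        · simp [hb]
        refine mul_eq_zero_of_right _ (sum_eq_zero fun k _ => ?_)
        split_ifs with hk
        · rw [Nat.eq_zero_of_not_pos fun hc => h ha hb k hc hk, mul_zero]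
        · rfl
      calc 0 * Nat.lcm i j = 0 := zero_mul _
        _ = i * j * (a i * b j * S) := by rw [hzero, mul_zero]
        _ = i * a i * (j * b j) * S := by ring
  · rw [if_neg hl, if_neg fun h => hl h.2.2.1, zero_mul]

theorem stmt14_general (n : ℕ) (α β γ : Equiv.Perm (Fin n)) (l : ℕ)
    (hmem : ∃ i j k : ℕ, 0 < numCycles α i ∧ 0 < numCycles β j ∧ 0 < numCycles γ k ∧
      Admissible i j k ∧ Nat.lcm i j = l)
    (hmin : ∀ i j k : ℕ, 0 < numCycles α i → 0 < numCycles β j → 0 < numCycles γ k →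
      Admissible i j k → l ≤ Nat.lcm i j) :
    Set.ncard {O : Finset (Fin n × Fin n × Fin n) | IsPLS O ∧ O.card = l ∧
        IsAutotopism (α, β, γ) O} =
      ∑ i ∈ Finset.Icc 1 n, ∑ j ∈ Finset.Icc 1 n,
        (if 0 < numCycles α i ∧ 0 < numCycles β j ∧ Nat.lcm i j = l ∧
            (∃ k : ℕ, 0 < numCycles γ k ∧ Admissible i j k) then
          numCycles α i * numCycles β j * Nat.gcd i j *
            ∑ k ∈ Finset.Icc 1 n, (if Admissible i j k then k * numCycles γ k else 0)
        else 0) := by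
  obtain ⟨i, j, -, hi, hj, -, -, hij⟩ := hmem
  have hl : 0 < l := hij ▸ Nat.lcm_pos (pos_of_numCycles_pos α hi) (pos_of_numCycles_pos β hj)
  have hset : {O : Finset (Fin n × Fin n × Fin n) | IsPLS O ∧ O.card = l ∧
      IsAutotopism (α, β, γ) O} = autotopicPLS α β γ l := by
    ext O
    simp [autotopicPLS]
  refine Nat.eq_of_mul_eq_mul_right hl ?_
  rw [hset, Set.ncard_coe_finset, ← card_admissibleTriples_eq_mul hmin, card_admissibleTriples,
    sum_mul]
  refine sum_congr rfl fun i' _ => ?_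
  rw [sum_mul]
  exact sum_congr rfl fun j' _ => (ite_mul_lcm_eq _ _ _ _ i' j' _).symm

/-- the number of partial Latin squares of minimal size `l` admitting
`Θ = (α,β,γ)` as autotopism, in terms of the cycle structure of `Θ`. -/
theorem stmt14 (n : ℕ) (α β γ : Equiv.Perm (Fin n)) (hA : IsAutPLS (α, β, γ)) (l : ℕ)
    (hmem : ∃ i j k : ℕ, 0 < numCycles α i ∧ 0 < numCycles β j ∧ 0 < numCycles γ k ∧
      Admissible i j k ∧ Nat.lcm i j = l)
    (hmin : ∀ i j k : ℕ, 0 < numCycles α i → 0 < numCycles β j → 0 < numCycles γ k →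
      Admissible i j k → l ≤ Nat.lcm i j) :
    Set.ncard {O : Finset (Fin n × Fin n × Fin n) | IsPLS O ∧ O.card = l ∧
        IsAutotopism (α, β, γ) O} =
      ∑ i ∈ Finset.Icc 1 n, ∑ j ∈ Finset.Icc 1 n,
        (if 0 < numCycles α i ∧ 0 < numCycles β j ∧ Nat.lcm i j = l ∧
            (∃ k : ℕ, 0 < numCycles γ k ∧ Admissible i j k) then
          numCycles α i * numCycles β j * Nat.gcd i j *
            ∑ k ∈ Finset.Icc 1 n, (if Admissible i j k then k * numCycles γ k else 0)
        else 0) :=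
  stmt14_general n α β γ l hmem hmin
end

section
/- Let Θ₁, Θ₂ ∈ Sₙ³ be conjugate isotopisms. Then for every s ∈ [n²], the number of Θ₁-completable partial Latin squares of order n of size s equals the number of Θ₂-completable partial Latin squares of order n of size s. -/
open scoped Classical

/-- The componentwise map on triples induced by an isotopism. -/
def isoFun {n : ℕ} (Θ : Iso n) : Fin n × Fin n × Fin n → Fin n × Fin n × Fin n :=
  fun t => (Θ.1 t.1, Θ.2.1 t.2.1, Θ.2.2 t.2.2)

lemma isoFun_injective {n : ℕ} (Θ : Iso n) : Function.Injective (isoFun Θ) := by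
  rintro ⟨a, b, c⟩ ⟨a', b', c'⟩ h
  simp only [isoFun, Prod.mk.injEq] at h
  exact Prod.ext (Θ.1.injective h.1)
    (Prod.ext (Θ.2.1.injective h.2.1) (Θ.2.2.injective h.2.2))

lemma applyIso_eq {n : ℕ} (Θ : Iso n) (O : Finset (Fin n × Fin n × Fin n)) :
    applyIso Θ O = O.image (isoFun Θ) := rfl

lemma applyIso_comp {n : ℕ} (Θ Θ' : Iso n) (O : Finset (Fin n × Fin n × Fin n)) :
    applyIso (compIso Θ Θ') O = applyIso Θ (applyIso Θ' O) := by
  simp only [applyIso_eq, Finset.image_image]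
  rfl

lemma applyIso_inv_left {n : ℕ} (Θ : Iso n) (O : Finset (Fin n × Fin n × Fin n)) :
    applyIso (invIso Θ) (applyIso Θ O) = O := by
  rw [← applyIso_comp]
  have : compIso (invIso Θ) Θ = (1, 1, 1) := by
    simp [compIso, invIso]
  rw [this]
  ext t
  simp [applyIso_eq, isoFun]

lemma applyIso_inv_right {n : ℕ} (Θ : Iso n) (O : Finset (Fin n × Fin n × Fin n)) :
    applyIso Θ (applyIso (invIso Θ) O) = O := by
  rw [← applyIso_comp]
  have : compIso Θ (invIso Θ) = (1, 1, 1) := by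
    simp [compIso, invIso]
  rw [this]
  ext t
  simp [applyIso_eq, isoFun]

lemma applyIso_card {n : ℕ} (Θ : Iso n) (O : Finset (Fin n × Fin n × Fin n)) :
    (applyIso Θ O).card = O.card :=
  Finset.card_image_of_injective _ (isoFun_injective Θ)

lemma applyIso_pls {n : ℕ} (Θ : Iso n) {O : Finset (Fin n × Fin n × Fin n)}
    (h : IsPLS O) : IsPLS (applyIso Θ O) := by
  intro t₁ ht₁ t₂ ht₂
  rw [applyIso_eq, Finset.mem_image] at ht₁ ht₂
  obtain ⟨u₁, hu₁, rfl⟩ := ht₁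
  obtain ⟨u₂, hu₂, rfl⟩ := ht₂
  have H := h u₁ hu₁ u₂ hu₂
  refine ⟨fun ⟨h1, h2⟩ => ?_, fun ⟨h1, h2⟩ => ?_, fun ⟨h1, h2⟩ => ?_⟩
  · exact congrArg _ (H.1 ⟨Θ.1.injective h1, Θ.2.1.injective h2⟩)
  · exact congrArg _ (H.2.1 ⟨Θ.1.injective h1, Θ.2.2.injective h2⟩)
  · exact congrArg _ (H.2.2 ⟨Θ.2.1.injective h1, Θ.2.2.injective h2⟩)

lemma applyIso_aut {n : ℕ} (Θ Θ₁ : Iso n) {O : Finset (Fin n × Fin n × Fin n)}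
    (h : IsAutotopism Θ₁ O) :
    IsAutotopism (compIso Θ (compIso Θ₁ (invIso Θ))) (applyIso Θ O) := by
  unfold IsAutotopism at h ⊢
  rw [applyIso_comp, applyIso_comp, applyIso_inv_left, h]

lemma applyIso_completable {n : ℕ} (Θ Θ₁ : Iso n) {O : Finset (Fin n × Fin n × Fin n)}
    (h : ThetaCompletable Θ₁ O) :
    ThetaCompletable (compIso Θ (compIso Θ₁ (invIso Θ))) (applyIso Θ O) := by
  obtain ⟨hp, ha, L, ⟨hLp, hLc⟩, hLa, hsub⟩ := h
  exact ⟨applyIso_pls Θ hp, applyIso_aut Θ Θ₁ ha, applyIso Θ L,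
    ⟨applyIso_pls Θ hLp, by rw [applyIso_card]; exact hLc⟩,
    applyIso_aut Θ Θ₁ hLa, Finset.image_subset_image hsub⟩

lemma myConjInv {n : ℕ} (Θ Θ₁ : Iso n) :
    compIso (invIso Θ) (compIso (compIso Θ (compIso Θ₁ (invIso Θ))) (invIso (invIso Θ))) = Θ₁ := by
  simp [compIso, invIso, mul_assoc]

/-- conjugate isotopisms have the same number of `Θ`-completable partial
Latin squares of each size `s ∈ [n²]`. -/
theorem stmt16 (n : ℕ) (Θ₁ Θ₂ : Iso n)
    (hconj : ∃ Θ : Iso n, Θ₂ = compIso Θ (compIso Θ₁ (invIso Θ)))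
    (s : ℕ) (hs₁ : 1 ≤ s) (hs₂ : s ≤ n * n) :
    Set.ncard {O : Finset (Fin n × Fin n × Fin n) | O.card = s ∧ ThetaCompletable Θ₁ O} =
    Set.ncard {O : Finset (Fin n × Fin n × Fin n) | O.card = s ∧ ThetaCompletable Θ₂ O} := by
  obtain ⟨Θ, rfl⟩ := hconj
  set Θ₂ := compIso Θ (compIso Θ₁ (invIso Θ)) with hΘ₂
  have hinj : Function.Injective (applyIso Θ) := by
    intro O O' h
    have := congrArg (applyIso (invIso Θ)) h
    rwa [applyIso_inv_left, applyIso_inv_left] at this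
  have himg : {O : Finset (Fin n × Fin n × Fin n) | O.card = s ∧ ThetaCompletable Θ₂ O} =
      applyIso Θ '' {O : Finset (Fin n × Fin n × Fin n) | O.card = s ∧ ThetaCompletable Θ₁ O} := by
    ext O
    constructor
    · rintro ⟨hc, hO⟩
      refine ⟨applyIso (invIso Θ) O, ⟨?_, ?_⟩, applyIso_inv_right Θ O⟩
      · rw [applyIso_card]; exact hc
      · have h2 := applyIso_completable (invIso Θ) Θ₂ hO
        rwa [hΘ₂, myConjInv] at h2
    · rintro ⟨O', ⟨hc, hO'⟩, rfl⟩
      exact ⟨(applyIso_card Θ O').trans hc, applyIso_completable Θ Θ₁ hO'⟩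
  rw [himg, Set.ncard_image_of_injective _ hinj]
end
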